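/- arXiv:1006.2258 — 3 statements merged into one kernel-verified Lean document; each statement's English description precedes it below -/
import Mathlib

section
/- Let n ≥ 3 and let 1 < d_1 < ⋯ < d_m < n (m ≥ 0). Then the starting set of δ_{d_1,…,d_m} is S(δ_{d_1,…,d_m}) = { j ∈ {1,…,n−1} : j ∈ {1} ∪ U and j+1 ∉ U }. -/
/-- Relations for the braid group on `n` strands, with generators `σ_1, …, σ_{n-1}`
(generators with indices outside `{1, …, n-1}` are killed). -/
def braidRels (n : ℕ) : Set (FreeGroup ℕ) :=
  { r | (∃ i : ℕ, 1 ≤ i ∧ i + 2 ≤ n ∧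
          r = FreeGroup.of i * FreeGroup.of (i + 1) * FreeGroup.of i *
              (FreeGroup.of (i + 1) * FreeGroup.of i * FreeGroup.of (i + 1))⁻¹) ∨
       (∃ i j : ℕ, 1 ≤ i ∧ i + 2 ≤ j ∧ j + 1 ≤ n ∧
          r = FreeGroup.of i * FreeGroup.of j * (FreeGroup.of j * FreeGroup.of i)⁻¹) ∨
       (∃ i : ℕ, (i = 0 ∨ n ≤ i) ∧ r = FreeGroup.of i) }

/-- The braid group `B_n` on `n` strands. -/
abbrev B (n : ℕ) : Type := PresentedGroup (braidRels n)

/-- The Artin generator `σ_i` of `B n`. -/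
def σb (n i : ℕ) : B n := PresentedGroup.of i

/-- The element of `B n` represented by a word in the generators. -/
def word (n : ℕ) (l : List ℕ) : B n := (l.map (σb n)).prod

/-- The positive braid monoid `B_n^+`. -/
def Bpos (n : ℕ) : Submonoid (B n) :=
  Submonoid.closure { x | ∃ i : ℕ, 1 ≤ i ∧ i ≤ n - 1 ∧ x = σb n i }

/-- The prefix order: `a ≼ b`. -/
def bLe (n : ℕ) (a b : B n) : Prop := a⁻¹ * b ∈ Bpos n

/-- The suffix order: `a ≽ b`. -/
def bGe (n : ℕ) (a b : B n) : Prop := a * b⁻¹ ∈ Bpos n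

/-- The list `[a, a-1, …, b]` (empty if `a < b`). -/
def descList (a b : ℕ) : List ℕ := (List.range' b (a + 1 - b)).reverse

/-- The Garside element `Δ_n = σ_1 (σ_2 σ_1) ⋯ (σ_{n-1} σ_{n-2} ⋯ σ_1)`. -/
def DeltaB (n : ℕ) : B n :=
  word n (((List.range' 1 (n - 1)).map fun t => descList t 1).flatten)

/-- The element `δ = σ_1 σ_2 ⋯ σ_{n-1}`. -/
def deltaB (n : ℕ) : B n := word n (List.range' 1 (n - 1))

/-- Simple elements: positive prefixes of `Δ_n`. -/
def isSimple (n : ℕ) (s : B n) : Prop := s ∈ Bpos n ∧ bLe n s (DeltaB n)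

/-- The starting set `S(a) = {i : σ_i ≼ a}`. -/
def startSet (n : ℕ) (a : B n) : Set ℕ :=
  { i | 1 ≤ i ∧ i ≤ n - 1 ∧ bLe n (σb n i) a }

/-- The finishing set `F(a) = {i : a ≽ σ_i}`. -/
def finishSet (n : ℕ) (a : B n) : Set ℕ :=
  { i | 1 ≤ i ∧ i ≤ n - 1 ∧ bGe n a (σb n i) }

/-- The simple conjugate `δ_{d_1,…,d_m}` of `δ`, where `l = [d_1, …, d_m]`. -/
def deltaD (n : ℕ) (l : List ℕ) : B n :=
  word n ((((1 :: l).zip (l ++ [n])).map fun p => descList (p.2 - 1) p.1).flatten)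

/-- The simple element `α_{i,j}`. -/
def alphaB (n i j : ℕ) : B n :=
  if i ≤ j then word n (List.range' i (j + 1 - i)) else word n (descList i j)

/-- The conjugate `x_{η,i_1,…,i_{l+1}} = w⁻¹ η w`, `w = α_{i_1,i_2} α_{i_2,i_3} ⋯ α_{i_l,i_{l+1}}`. -/
def xbraid (n : ℕ) (η : B n) (i : ℕ → ℕ) (l : ℕ) : B n :=
  (((List.range l).map fun idx => alphaB n (i (idx + 1)) (i (idx + 2))).prod)⁻¹ * η *
    ((List.range l).map fun idx => alphaB n (i (idx + 1)) (i (idx + 2))).prod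

/-- A left-weighted sequence of proper simple factors. -/
def LWSeq (n : ℕ) (ys : List (B n)) : Prop :=
  (∀ y ∈ ys, isSimple n y ∧ y ≠ 1 ∧ y ≠ DeltaB n) ∧
  List.Chain' (fun a b => startSet n b ⊆ finishSet n a) ys

/-! ### Auxiliary development -/

/-- The crossing-number group: a permutation of strand positions together with a
crossing-count function on ordered pairs of positions. -/
@[ext] structure GG where
  perm : Equiv.Perm ℕ
  cf : ℕ → ℕ → ℤ

namespace GG

instance : Mul GG :=
  ⟨fun x y => ⟨x.perm * y.perm, fun a b => x.cf a b + y.cf (x.perm⁻¹ a) (x.perm⁻¹ b)⟩⟩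
instance : One GG := ⟨⟨1, fun _ _ => 0⟩⟩
instance : Inv GG := ⟨fun x => ⟨x.perm⁻¹, fun a b => - x.cf (x.perm a) (x.perm b)⟩⟩

@[simp] lemma mul_perm (x y : GG) : (x * y).perm = x.perm * y.perm := rfl
@[simp] lemma mul_cf (x y : GG) (a b : ℕ) :
    (x * y).cf a b = x.cf a b + y.cf (x.perm⁻¹ a) (x.perm⁻¹ b) := rfl
@[simp] lemma one_perm : (1 : GG).perm = 1 := rfl
@[simp] lemma one_cf (a b : ℕ) : (1 : GG).cf a b = 0 := rfl
@[simp] lemma inv_perm (x : GG) : (x⁻¹).perm = x.perm⁻¹ := rfl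
@[simp] lemma inv_cf (x : GG) (a b : ℕ) : (x⁻¹).cf a b = - x.cf (x.perm a) (x.perm b) := rfl

instance : Group GG where
  mul_assoc x y z := by
    ext a b
    · simp [mul_assoc]
    · simp [Equiv.Perm.mul_apply, add_assoc]
  one_mul x := by ext a b <;> simp
  mul_one x := by ext a b <;> simp
  inv_mul_cancel x := by ext a b <;> simp

end GG

/-- Plain-function version of the adjacent transposition. -/
def sw (i x : ℕ) : ℕ := if x = i then i+1 else if x = i+1 then i else x

@[simp] lemma sw_left (i : ℕ) : sw i i = i+1 := by simp [sw]
@[simp] lemma sw_right (i : ℕ) : sw i (i+1) = i := by simp [sw]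
lemma sw_other {i x : ℕ} (h1 : ¬ x = i) (h2 : ¬ x = i+1) : sw i x = x := by
  simp [sw, h1, h2]

lemma swap_eq_sw (i x : ℕ) : Equiv.swap i (i+1) x = sw i x := by
  simp [Equiv.swap_apply_def, sw]

/-- The image of the generator `σ_i` in `GG`. -/
def gen (n i : ℕ) : GG :=
  if 1 ≤ i ∧ i ≤ n - 1 then
    ⟨Equiv.swap i (i+1), fun a b => if a = i ∧ b = i + 1 then 1 else 0⟩
  else 1

lemma gen_perm {n i : ℕ} (h1 : 1 ≤ i) (h2 : i ≤ n - 1) :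
    (gen n i).perm = Equiv.swap i (i+1) := by rw [gen, if_pos ⟨h1, h2⟩]

lemma gen_cf {n i : ℕ} (h1 : 1 ≤ i) (h2 : i ≤ n - 1) (a b : ℕ) :
    (gen n i).cf a b = if a = i ∧ b = i + 1 then 1 else 0 := by rw [gen, if_pos ⟨h1, h2⟩]

lemma swap_braid (i : ℕ) :
    Equiv.swap i (i+1) * Equiv.swap (i+1) (i+2) * Equiv.swap i (i+1) =
    Equiv.swap (i+1) (i+2) * Equiv.swap i (i+1) * Equiv.swap (i+1) (i+2) := by
  have h1 := Equiv.swap_mul_swap_mul_swap (x := i+2) (y := i+1) (z := i) (by omega) (by omega)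
  have h2 := Equiv.swap_mul_swap_mul_swap (x := i) (y := i+1) (z := i+2) (by omega) (by omega)
  rw [Equiv.swap_comm (i+1) i, Equiv.swap_comm (i+2) (i+1)] at h1
  rw [h1, h2, Equiv.swap_comm]

lemma swap_disj (i j : ℕ) (h : i + 2 ≤ j) :
    Equiv.swap i (i+1) * Equiv.swap j (j+1) = Equiv.swap j (j+1) * Equiv.swap i (i+1) := by
  ext x
  simp only [Equiv.Perm.mul_apply, swap_eq_sw, sw]
  split_ifs <;> omega

lemma gen_rels (n : ℕ) : ∀ r ∈ braidRels n, FreeGroup.lift (gen n) r = 1 := by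
  rintro r (⟨i, h1, h2, rfl⟩ | ⟨i, j, h1, h2, h3, rfl⟩ | ⟨i, hi, rfl⟩)
  · have i1 : 1 ≤ i := h1
    have i2 : i ≤ n - 1 := by omega
    have i3 : 1 ≤ i + 1 := by omega
    have i4 : i + 1 ≤ n - 1 := by omega
    simp only [map_mul, map_inv, FreeGroup.lift_apply_of, mul_inv_eq_one]
    ext a b
    · simp only [GG.mul_perm, gen_perm i1 i2, gen_perm i3 i4]
      rw [show i + 1 + 1 = i + 2 by omega, swap_braid]
    · simp only [GG.mul_cf, GG.mul_perm, gen_perm i1 i2, gen_perm i3 i4,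
        gen_cf i1 i2, gen_cf i3 i4, Equiv.swap_inv, mul_inv_rev, Equiv.Perm.mul_apply,
        swap_eq_sw]
      have ha : a = i ∨ a = i+1 ∨ a = i+2 ∨ (¬a=i ∧ ¬a=i+1 ∧ ¬a=i+2) := by omega
      have hb : b = i ∨ b = i+1 ∨ b = i+2 ∨ (¬b=i ∧ ¬b=i+1 ∧ ¬b=i+2) := by omega
      obtain rfl|rfl|rfl|⟨p1,p2,p3⟩ := ha <;> obtain rfl|rfl|rfl|⟨q1,q2,q3⟩ := hb <;>
        simp (disch := omega) [sw_other, *] <;> omega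
  · have i1 : 1 ≤ i := h1
    have i2 : i ≤ n - 1 := by omega
    have j1 : 1 ≤ j := by omega
    have j2 : j ≤ n - 1 := by omega
    simp only [map_mul, map_inv, FreeGroup.lift_apply_of, mul_inv_eq_one]
    ext a b
    · simp only [GG.mul_perm, gen_perm i1 i2, gen_perm j1 j2]
      rw [swap_disj i j h2]
    · simp only [GG.mul_cf, GG.mul_perm, gen_perm i1 i2, gen_perm j1 j2,
        gen_cf i1 i2, gen_cf j1 j2, Equiv.swap_inv, mul_inv_rev, Equiv.Perm.mul_apply,
        swap_eq_sw]
      have ha : a = i ∨ a = i+1 ∨ a = j ∨ a = j+1 ∨ (¬a=i ∧ ¬a=i+1 ∧ ¬a=j ∧ ¬a=j+1) := by omega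
      have hb : b = i ∨ b = i+1 ∨ b = j ∨ b = j+1 ∨ (¬b=i ∧ ¬b=i+1 ∧ ¬b=j ∧ ¬b=j+1) := by omega
      obtain rfl|rfl|rfl|rfl|⟨p1,p2,p3,p4⟩ := ha <;> obtain rfl|rfl|rfl|rfl|⟨q1,q2,q3,q4⟩ := hb <;>
        simp (disch := omega) [sw_other, *] <;> omega
  · simp only [FreeGroup.lift_apply_of, gen]
    rw [if_neg (by omega)]

/-- The crossing-number homomorphism. -/
def phi (n : ℕ) : B n →* GG := PresentedGroup.toGroup (gen_rels n)

lemma phi_of (n i : ℕ) : phi n (σb n i) = gen n i :=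
  PresentedGroup.toGroup.of (gen_rels n)

lemma word_nil (n : ℕ) : word n [] = 1 := rfl

lemma word_cons (n i : ℕ) (L : List ℕ) : word n (i :: L) = σb n i * word n L := by
  simp [word]

lemma word_append (n : ℕ) (L1 L2 : List ℕ) :
    word n (L1 ++ L2) = word n L1 * word n L2 := by
  simp [word]

lemma descList_of_lt {a b : ℕ} (h : a < b) : descList a b = [] := by
  rw [descList, show a + 1 - b = 0 by omega]
  rfl

lemma descList_cons {a b : ℕ} (hb : 1 ≤ b) (h : b ≤ a) : descList a b = a :: descList (a-1) b := by
  rw [descList, descList, show a + 1 - b = (a - 1 + 1 - b) + 1 by omega, List.range'_concat,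
    List.reverse_append, show b + 1 * (a - 1 + 1 - b) = a by omega]
  rfl

lemma mem_descList {a b i : ℕ} (h : i ∈ descList a b) : b ≤ i ∧ i ≤ a := by
  rw [descList, List.mem_reverse, List.mem_range'_1] at h
  omega

lemma sigma_mem_Bpos {n i : ℕ} (h1 : 1 ≤ i) (h2 : i ≤ n-1) : σb n i ∈ Bpos n :=
  Submonoid.subset_closure ⟨i, h1, h2, rfl⟩

lemma word_mem_Bpos {n : ℕ} {L : List ℕ} (h : ∀ i ∈ L, 1 ≤ i ∧ i ≤ n - 1) :
    word n L ∈ Bpos n := by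
  induction L with
  | nil => exact (Bpos n).one_mem
  | cons i L ih =>
    rw [word_cons]
    exact (Bpos n).mul_mem (sigma_mem_Bpos (h i (.head _)).1 (h i (.head _)).2)
      (ih fun j hj => h j (.tail _ hj))

lemma rel_one {n : ℕ} {r : FreeGroup ℕ} (hr : r ∈ braidRels n) :
    PresentedGroup.mk (braidRels n) r = 1 := by
  have : r ∈ Subgroup.normalClosure (braidRels n) := Subgroup.subset_normalClosure hr
  exact (QuotientGroup.eq_one_iff r).mpr this

lemma sigma_comm {n i j : ℕ} (h1 : 1 ≤ i) (h2 : i + 2 ≤ j) (h3 : j + 1 ≤ n) :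
    σb n i * σb n j = σb n j * σb n i := by
  have h := rel_one (n := n)
    (r := FreeGroup.of i * FreeGroup.of j * (FreeGroup.of j * FreeGroup.of i)⁻¹)
    (Or.inr (Or.inl ⟨i, j, h1, h2, h3, rfl⟩))
  simp only [map_mul, map_inv, mul_inv_eq_one] at h
  exact h

lemma word_comm {n j : ℕ} {L : List ℕ} (hj : j + 1 ≤ n) (h : ∀ i ∈ L, 1 ≤ i ∧ i + 2 ≤ j) :
    word n L * σb n j = σb n j * word n L := by
  induction L with
  | nil => rw [word_nil, one_mul, mul_one]
  | cons i L ih =>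
    rw [word_cons, mul_assoc, ih (fun x hx => h x (.tail _ hx)), ← mul_assoc,
      sigma_comm (h i (.head _)).1 (h i (.head _)).2 hj, mul_assoc]

/-- The product of the runs of `δ` starting from boundary `c`. -/
def Wc (n c : ℕ) (l : List ℕ) : B n :=
  word n ((((c :: l).zip (l ++ [n])).map fun p => descList (p.2 - 1) p.1).flatten)

lemma deltaD_eq_Wc (n : ℕ) (l : List ℕ) : deltaD n l = Wc n 1 l := rfl

lemma Wc_nil (n c : ℕ) : Wc n c [] = word n (descList (n-1) c) := by
  simp [Wc]

lemma Wc_cons (n c d : ℕ) (l : List ℕ) :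
    Wc n c (d :: l) = word n (descList (d-1) c) * Wc n d l := by
  rw [Wc, Wc, List.cons_append, List.zip_cons_cons, List.map_cons, List.flatten_cons, word_append]

/-- The inverse of the permutation underlying a single run. -/
def rinv (c d x : ℕ) : ℕ := if x = d then c else if c ≤ x ∧ x < d then x + 1 else x

/-- The crossing function of `Wc n c l`. -/
def Fc (n : ℕ) : ℕ → List ℕ → ℕ → ℕ → ℤ
  | c, [], x, y => if c ≤ x ∧ x ≤ n - 1 ∧ y = n then 1 else 0
  | c, d :: l, x, y =>
      (if c ≤ x ∧ x ≤ d - 1 ∧ y = d then 1 else 0) + Fc n d l (rinv c d x) (rinv c d y)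

lemma run_cf (n : ℕ) : ∀ (k : ℕ) {c : ℕ}, 1 ≤ c → c + k ≤ n - 1 → ∀ a b,
    (phi n (word n (descList (c+k) c))).cf a b
      = if c ≤ a ∧ a ≤ c + k ∧ b = c + k + 1 then 1 else 0 := by
  intro k
  induction k with
  | zero =>
    intro c hc hk a b
    simp only [Nat.add_zero]
    rw [descList_cons hc (by omega), descList_of_lt (by omega), word_cons, word_nil, mul_one,
      phi_of, gen_cf hc (by omega)]
    split_ifs <;> omega
  | succ k ih =>
    intro c hc hk a b
    have e : descList (c+(k+1)) c = (c+k+1) :: descList (c+k) c := by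
      rw [descList_cons hc (by omega), show c + (k+1) = c+k+1 by omega,
        show c+k+1-1 = c+k by omega]
    rw [e, word_cons, map_mul, GG.mul_cf, phi_of, gen_cf (by omega) (by omega),
      gen_perm (by omega) (by omega), Equiv.swap_inv]
    rw [ih hc (by omega) (Equiv.swap (c+k+1) (c+k+1+1) a) (Equiv.swap (c+k+1) (c+k+1+1) b)]
    rw [swap_eq_sw, swap_eq_sw]
    simp only [sw]
    split_ifs <;> omega

lemma run_perm (n : ℕ) : ∀ (k : ℕ) {c : ℕ}, 1 ≤ c → c + k ≤ n - 1 → ∀ x,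
    ((phi n (word n (descList (c+k) c))).perm)⁻¹ x = rinv c (c+k+1) x := by
  intro k
  induction k with
  | zero =>
    intro c hc hk x
    simp only [Nat.add_zero]
    rw [descList_cons hc (by omega), descList_of_lt (by omega), word_cons, word_nil, mul_one,
      phi_of, gen_perm hc (by omega), Equiv.swap_inv, swap_eq_sw, rinv, sw]
    split_ifs <;> omega
  | succ k ih =>
    intro c hc hk x
    have e : descList (c+(k+1)) c = (c+k+1) :: descList (c+k) c := by
      rw [descList_cons hc (by omega), show c + (k+1) = c+k+1 by omega,
        show c+k+1-1 = c+k by omega]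
    rw [e, word_cons, map_mul, GG.mul_perm, mul_inv_rev, Equiv.Perm.mul_apply,
      phi_of, gen_perm (by omega) (by omega), Equiv.swap_inv, swap_eq_sw]
    rw [ih hc (by omega) (sw (c+k+1) x)]
    rw [rinv, rinv, sw]
    split_ifs <;> omega

lemma chain'_head_lt {d n : ℕ} {l : List ℕ} (h : List.Chain' (· < ·) (d :: l ++ [n])) :
    d < n ∧ (∀ x ∈ l, d < x) ∧ (∀ x ∈ l, x < n) := by
  have hp := (List.isChain_iff_pairwise.mp h)
  have h1 := (List.pairwise_cons.mp hp).1
  have h2 := (List.pairwise_cons.mp hp).2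
  refine ⟨h1 n (by simp), fun x hx => h1 x (by simp [hx]), fun x hx => ?_⟩
  exact (List.pairwise_append.mp h2).2.2 x hx n (List.mem_singleton_self n)

lemma Wc_cf (n : ℕ) : ∀ (l : List ℕ) {c : ℕ}, 1 ≤ c →
    List.Chain' (· < ·) (c :: l ++ [n]) → ∀ x y,
    (phi n (Wc n c l)).cf x y = Fc n c l x y := by
  intro l
  induction l with
  | nil =>
    intro c hc hch x y
    have hcn : c < n := (chain'_head_lt hch).1
    rw [Wc_nil]
    have h := run_cf n (n-1-c) hc (by omega) x y
    rw [show c + (n-1-c) = n-1 by omega, show n-1+1 = n by omega] at h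
    rw [h]
    simp only [Fc]
  | cons d l ih =>
    intro c hc hch x y
    have hcd : c < d := List.rel_of_chain_cons hch
    have hch' : List.Chain' (· < ·) (d :: l ++ [n]) := List.chain_of_chain_cons hch
    have hdn : d < n := (chain'_head_lt hch').1
    rw [Wc_cons, map_mul, GG.mul_cf]
    have h1 := run_cf n (d-1-c) hc (by omega) x y
    have h2 := run_perm n (d-1-c) hc (by omega)
    rw [show c + (d-1-c) = d-1 by omega, show d-1+1 = d by omega] at h1 h2
    rw [h1, h2 x, h2 y, ih (by omega) hch' (rinv c d x) (rinv c d y)]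
    simp only [Fc]

lemma Fc_zero (n : ℕ) : ∀ (l : List ℕ) {c x : ℕ} (y : ℕ),
    List.Chain' (· < ·) (c :: l ++ [n]) → x < c → Fc n c l x y = 0 := by
  intro l
  induction l with
  | nil =>
    intro c x y _ hx
    simp only [Fc]
    rw [if_neg (by omega)]
  | cons d l ih =>
    intro c x y hch hx
    have hcd : c < d := List.rel_of_chain_cons hch
    have hch' : List.Chain' (· < ·) (d :: l ++ [n]) := List.chain_of_chain_cons hch
    have e : rinv c d x = x := by unfold rinv; split_ifs <;> omega
    simp only [Fc]
    rw [if_neg (by omega), e, ih (rinv c d y) hch' (by omega), add_zero]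

lemma Fc_cross (n : ℕ) : ∀ (l : List ℕ) {c j : ℕ}, 1 ≤ c →
    List.Chain' (· < ·) (c :: l ++ [n]) → Fc n c l j (j+1) ≠ 0 →
    (j + 1 ∈ l ∨ j + 1 = n) ∧ (j = c ∨ j ∉ l) := by
  intro l
  induction l with
  | nil =>
    intro c j hc hch h
    simp only [Fc] at h
    by_cases hcond : c ≤ j ∧ j ≤ n - 1 ∧ j + 1 = n
    · exact ⟨Or.inr hcond.2.2, Or.inr List.not_mem_nil⟩
    · rw [if_neg hcond] at h
      exact absurd rfl h
  | cons d l ih =>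
    intro c j hc hch h
    have hcd : c < d := List.rel_of_chain_cons hch
    have hch' : List.Chain' (· < ·) (d :: l ++ [n]) := List.chain_of_chain_cons hch
    have hdl := chain'_head_lt hch'
    simp only [Fc] at h
    by_cases h1 : j + 1 = d
    · refine ⟨Or.inl (by simp [h1]), Or.inr ?_⟩
      intro hmem
      rcases List.mem_cons.mp hmem with e | e
      · omega
      · exact absurd (hdl.2.1 j e) (by omega)
    by_cases h2 : j = d
    · exfalso
      apply h
      have e1 : rinv c d j = c := by unfold rinv; split_ifs <;> omega
      have e2 : rinv c d (j+1) = j+1 := by unfold rinv; split_ifs <;> omega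
      rw [if_neg (by omega), e1, e2, Fc_zero n l (j+1) hch' (by omega), add_zero]
    by_cases h3 : j < d
    · exfalso
      apply h
      have e : rinv c d j < d := by unfold rinv; split_ifs <;> omega
      rw [if_neg (by omega), Fc_zero n l (rinv c d (j+1)) hch' e, add_zero]
    · have e1 : rinv c d j = j := by unfold rinv; split_ifs <;> omega
      have e2 : rinv c d (j+1) = j+1 := by unfold rinv; split_ifs <;> omega
      rw [if_neg (by omega), e1, e2, zero_add] at h
      obtain ⟨hA, hB⟩ := ih (by omega) hch' h
      constructor
      · rcases hA with hA | hA
        · exact Or.inl (List.mem_cons_of_mem d hA)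
        · exact Or.inr hA
      · right
        intro hmem
        rcases List.mem_cons.mp hmem with e | e
        · omega
        · rcases hB with hB | hB
          · omega
          · exact hB e

lemma Wc_pos (n : ℕ) : ∀ (l : List ℕ) {c : ℕ}, 1 ≤ c →
    List.Chain' (· < ·) (c :: l ++ [n]) → Wc n c l ∈ Bpos n := by
  intro l
  induction l with
  | nil =>
    intro c hc hch
    have hcn : c < n := (chain'_head_lt hch).1
    rw [Wc_nil]
    exact word_mem_Bpos fun i hi => by have := mem_descList hi; omega
  | cons d l ih =>
    intro c hc hch
    have hcd : c < d := List.rel_of_chain_cons hch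
    have hch' : List.Chain' (· < ·) (d :: l ++ [n]) := List.chain_of_chain_cons hch
    have hdn : d < n := (chain'_head_lt hch').1
    rw [Wc_cons]
    refine (Bpos n).mul_mem (word_mem_Bpos fun i hi => ?_) (ih (by omega) hch')
    have := mem_descList hi
    omega

lemma Wc_factor (n : ℕ) : ∀ (l : List ℕ) {c j : ℕ}, 1 ≤ c →
    List.Chain' (· < ·) (c :: l ++ [n]) →
    (j + 1 ∈ l ∨ j + 1 = n) → (j = c ∨ (c < j ∧ j ∉ l)) →
    ∃ p ∈ Bpos n, Wc n c l = σb n j * p := by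
  intro l
  induction l with
  | nil =>
    intro c j hc hch h1 h2
    have hcn : c < n := (chain'_head_lt hch).1
    have hjn : j + 1 = n := by
      rcases h1 with h | h
      · exact absurd h List.not_mem_nil
      · exact h
    have hcj : c ≤ j := by omega
    rw [Wc_nil, descList_cons (by omega) (by omega), word_cons, show n-1 = j by omega]
    exact ⟨word n (descList (j-1) c),
      word_mem_Bpos (fun i hi => by have := mem_descList hi; omega), rfl⟩
  | cons d l ih =>
    intro c j hc hch h1 h2
    have hcd : c < d := List.rel_of_chain_cons hch
    have hch' : List.Chain' (· < ·) (d :: l ++ [n]) := List.chain_of_chain_cons hch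
    have hdl := chain'_head_lt hch'
    by_cases h : j + 1 = d
    · have hcj : c ≤ j := by omega
      rw [Wc_cons, show d-1 = j by omega, descList_cons (by omega) hcj, word_cons, mul_assoc]
      refine ⟨word n (descList (j-1) c) * Wc n d l,
        (Bpos n).mul_mem (word_mem_Bpos fun i hi => ?_) (Wc_pos n l (by omega) hch'), rfl⟩
      have := mem_descList hi
      omega
    · have h1' : j + 1 ∈ l ∨ j + 1 = n := by
        rcases h1 with hA | hA
        · rcases List.mem_cons.mp hA with e | e
          · omega
          · exact Or.inl e
        · exact Or.inr hA
      have hdj : d < j + 1 := by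
        rcases h1' with hA | hA
        · exact hdl.2.1 _ hA
        · omega
      have hjd : d < j := by
        rcases h2 with hA | hA
        · omega
        · have : j ≠ d := fun e => hA.2 (by simp [e])
          omega
      have hjnotl : j ∉ l := by
        rcases h2 with hA | hA
        · omega
        · exact fun e => hA.2 (List.mem_cons_of_mem d e)
      have hjn : j + 1 ≤ n := by
        rcases h1' with hA | hA
        · exact le_of_lt (hdl.2.2 (j+1) hA)
        · omega
      obtain ⟨p, hp, hW⟩ := ih (by omega) hch' h1' (Or.inr ⟨hjd, hjnotl⟩)
      rw [Wc_cons, hW, ← mul_assoc, word_comm hjn ?_, mul_assoc]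
      · exact ⟨word n (descList (d-1) c) * p, (Bpos n).mul_mem
          (word_mem_Bpos fun i hi => by have := mem_descList hi; omega) hp, rfl⟩
      · intro i hi
        have := mem_descList hi
        omega

lemma cf_nonneg {n : ℕ} {x : B n} (hx : x ∈ Bpos n) : ∀ a b, 0 ≤ (phi n x).cf a b := by
  induction hx using Submonoid.closure_induction with
  | mem z hz =>
    obtain ⟨i, h1, h2, rfl⟩ := hz
    intro a b
    rw [phi_of, gen_cf h1 h2]
    split_ifs <;> omega
  | one =>
    intro a b
    rw [map_one]
    simp
  | mul x y hx hy ihx ihy =>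
    intro a b
    rw [map_mul, GG.mul_cf]
    have := ihx a b
    have := ihy ((phi n x).perm⁻¹ a) ((phi n x).perm⁻¹ b)
    omega

/-- the starting set of `δ_{d_1,…,d_m}` is
`{ j ∈ {1,…,n−1} : j ∈ {1} ∪ U and j+1 ∉ U }`, where `U = {2,…,n−1} ∖ {d_1,…,d_m}`. -/
theorem statement0 (n : ℕ) (hn : 3 ≤ n) (l : List ℕ)
    (hl : List.Chain' (· < ·) (1 :: (l ++ [n]))) :
    startSet n (deltaD n l) =
      { j | 1 ≤ j ∧ j ≤ n - 1 ∧
            (j = 1 ∨ (2 ≤ j ∧ j ≤ n - 1 ∧ j ∉ l)) ∧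
            ¬ (2 ≤ j + 1 ∧ j + 1 ≤ n - 1 ∧ j + 1 ∉ l) } := by
  ext j
  simp only [startSet, Set.mem_setOf_eq]
  constructor
  · rintro ⟨h1, h2, h3⟩
    refine ⟨h1, h2, ?_⟩
    have hδ : deltaD n l = σb n j * ((σb n j)⁻¹ * deltaD n l) :=
      (mul_inv_cancel_left _ _).symm
    have hkey : (phi n (deltaD n l)).cf j (j+1) ≠ 0 := by
      rw [hδ, map_mul, GG.mul_cf, phi_of, gen_cf h1 h2, if_pos ⟨rfl, rfl⟩]
      have := cf_nonneg h3 ((gen n j).perm⁻¹ j) ((gen n j).perm⁻¹ (j+1))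
      omega
    rw [deltaD_eq_Wc, Wc_cf n l (le_refl 1) hl j (j+1)] at hkey
    obtain ⟨hA, hB⟩ := Fc_cross n l (le_refl 1) hl hkey
    constructor
    · rcases hB with hB | hB
      · exact Or.inl hB
      · by_cases hj1 : j = 1
        · exact Or.inl hj1
        · exact Or.inr ⟨by omega, h2, hB⟩
    · rintro ⟨hx1, hx2, hx3⟩
      rcases hA with hA | hA
      · exact hx3 hA
      · omega
  · rintro ⟨h1, h2, h3, h4⟩
    refine ⟨h1, h2, ?_⟩
    have h1' : j + 1 ∈ l ∨ j + 1 = n := by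
      by_cases hle : j + 1 ≤ n - 1
      · by_cases hmem : j + 1 ∈ l
        · exact Or.inl hmem
        · exact absurd ⟨by omega, hle, hmem⟩ h4
      · exact Or.inr (by omega)
    have h2' : j = 1 ∨ (1 < j ∧ j ∉ l) := by
      rcases h3 with h3 | h3
      · exact Or.inl h3
      · exact Or.inr ⟨by omega, h3.2.2⟩
    obtain ⟨p, hp, hW⟩ := Wc_factor n l (le_refl 1) hl h1' h2'
    rw [bLe, deltaD_eq_Wc, hW, inv_mul_cancel_left]
    exact hp
end

section
/- Let n ≥ 3 and let 1 < d_1 < ⋯ < d_m < n (m ≥ 0). Then S(δ_{d_1,…,d_m}) ∩ F(δ_{d_1,…,d_m}) = ∅. -/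
set_option maxHeartbeats 1000000

theorem Equiv.Perm.apply_inv_self {α : Type*} (u : Equiv.Perm α) (x : α) : u (u⁻¹ x) = x :=
  u.apply_symm_apply x

theorem Equiv.Perm.inv_apply_self {α : Type*} (u : Equiv.Perm α) (x : α) : u⁻¹ (u x) = x :=
  u.symm_apply_apply x

namespace S2

def sw (n k : ℕ) : Equiv.Perm ℕ := if 1 ≤ k ∧ k + 1 ≤ n then Equiv.swap k (k+1) else 1

lemma swap_braid (i : ℕ) :
    Equiv.swap i (i+1) * Equiv.swap (i+1) (i+2) * Equiv.swap i (i+1)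
      = Equiv.swap (i+1) (i+2) * Equiv.swap i (i+1) * Equiv.swap (i+1) (i+2) := by
  ext x
  simp only [Equiv.Perm.mul_apply, Equiv.swap_apply_def]
  split_ifs <;> omega

lemma swap_comm' (i j : ℕ) (h : i + 2 ≤ j) :
    Equiv.swap i (i+1) * Equiv.swap j (j+1) = Equiv.swap j (j+1) * Equiv.swap i (i+1) := by
  ext x
  simp only [Equiv.Perm.mul_apply, Equiv.swap_apply_def]
  split_ifs <;> omega

lemma sw_rels (n : ℕ) : ∀ r ∈ braidRels n, FreeGroup.lift (sw n) r = 1 := by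
  intro r hr
  rcases hr with ⟨i, h1, h2, rfl⟩ | ⟨i, j, h1, h2, h3, rfl⟩ | ⟨i, h1, rfl⟩
  · simp only [map_mul, map_inv, FreeGroup.lift_apply_of, mul_inv_eq_one]
    have e1 : sw n i = Equiv.swap i (i+1) := by unfold sw; rw [if_pos]; omega
    have e2 : sw n (i+1) = Equiv.swap (i+1) (i+2) := by unfold sw; rw [if_pos]; omega
    rw [e1, e2, swap_braid]
  · simp only [map_mul, map_inv, FreeGroup.lift_apply_of, mul_inv_eq_one]
    have e1 : sw n i = Equiv.swap i (i+1) := by unfold sw; rw [if_pos]; omega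
    have e2 : sw n j = Equiv.swap j (j+1) := by unfold sw; rw [if_pos]; omega
    rw [e1, e2, swap_comm' i j h2]
  · simp only [FreeGroup.lift_apply_of]
    unfold sw; rw [if_neg]; omega

def π (n : ℕ) : B n →* Equiv.Perm ℕ := PresentedGroup.toGroup (sw_rels n)

def ef (n k : ℕ) : Multiplicative ℤ := if 1 ≤ k ∧ k + 1 ≤ n then Multiplicative.ofAdd 1 else 1

lemma ef_rels (n : ℕ) : ∀ r ∈ braidRels n, FreeGroup.lift (ef n) r = 1 := by
  intro r hr
  rcases hr with ⟨i, h1, h2, rfl⟩ | ⟨i, j, h1, h2, h3, rfl⟩ | ⟨i, h1, rfl⟩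
  · simp only [map_mul, map_inv, FreeGroup.lift_apply_of, mul_inv_eq_one]
    have e1 : ef n i = Multiplicative.ofAdd 1 := by unfold ef; rw [if_pos]; omega
    have e2 : ef n (i+1) = Multiplicative.ofAdd 1 := by unfold ef; rw [if_pos]; omega
    rw [e1, e2]
  · simp only [map_mul, map_inv, FreeGroup.lift_apply_of, mul_inv_eq_one]
    have e1 : ef n i = Multiplicative.ofAdd 1 := by unfold ef; rw [if_pos]; omega
    have e2 : ef n j = Multiplicative.ofAdd 1 := by unfold ef; rw [if_pos]; omega
    rw [e1, e2, mul_comm]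
  · simp only [FreeGroup.lift_apply_of]
    unfold ef; rw [if_neg]; omega

def ee (n : ℕ) : B n →* Multiplicative ℤ := PresentedGroup.toGroup (ef_rels n)

lemma π_σb (n i : ℕ) : π n (σb n i) = sw n i := PresentedGroup.toGroup.of _
lemma ee_σb (n i : ℕ) : ee n (σb n i) = ef n i := PresentedGroup.toGroup.of _

lemma π_word (n : ℕ) (L : List ℕ) : π n (word n L) = (L.map (sw n)).prod := by
  unfold word
  rw [map_list_prod, List.map_map]
  congr 1

lemma ee_word (n : ℕ) (L : List ℕ) : ee n (word n L) = (L.map (ef n)).prod := by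
  unfold word
  rw [map_list_prod, List.map_map]
  congr 1
  apply List.map_congr_left
  intro k _; exact ee_σb n k

/-! ### Tame permutations -/

def Tame (n : ℕ) (u : Equiv.Perm ℕ) : Prop := ∀ x, x = 0 ∨ n < x → u x = x

lemma Tame.one (n : ℕ) : Tame n 1 := fun _ _ => rfl

lemma Tame.mul {n u v} (hu : Tame n u) (hv : Tame n v) : Tame n (u * v) := by
  intro x hx
  simp only [Equiv.Perm.mul_apply, hv x hx, hu x hx]

lemma Tame.inv {n u} (hu : Tame n u) : Tame n u⁻¹ := by
  intro x hx
  have := hu x hx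
  conv_lhs => rw [← this]
  simp

lemma Tame.swap {n k : ℕ} (h1 : 1 ≤ k) (h2 : k + 1 ≤ n) : Tame n (Equiv.swap k (k+1)) := by
  intro x hx
  apply Equiv.swap_apply_of_ne_of_ne <;> omega

lemma Tame.sw (n k : ℕ) : Tame n (S2.sw n k) := by
  unfold S2.sw
  split_ifs with h
  · exact Tame.swap h.1 h.2
  · exact Tame.one n

def tameSub (n : ℕ) : Subgroup (Equiv.Perm ℕ) where
  carrier := {u | Tame n u}
  mul_mem' := fun h1 h2 => Tame.mul h1 h2
  one_mem' := Tame.one n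
  inv_mem' := fun h => Tame.inv h

lemma tame_pi (n : ℕ) (g : B n) : Tame n (π n g) := by
  have key : g ∈ (tameSub n).comap (π n) := by
    apply PresentedGroup.generated_by
    intro j
    simp only [Subgroup.mem_comap]
    have : π n (σb n j) = sw n j := π_σb n j
    show Tame n (π n (PresentedGroup.of j))
    rw [show (PresentedGroup.of j : B n) = σb n j from rfl, this]
    exact Tame.sw n j
  exact key

lemma tame_le {n u} (hu : Tame n u) {x : ℕ} (hx : x ≤ n) : u x ≤ n := by
  by_contra h
  push_neg at h
  have := hu (u x) (Or.inr h)
  have := u.injective this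
  omega

lemma tame_pos {n u} (hu : Tame n u) {x : ℕ} (hx : 1 ≤ x) (hx2 : x ≤ n) : 1 ≤ u x := by
  rcases Nat.eq_zero_or_pos (u x) with h | h
  · have h0 : u 0 = 0 := hu 0 (Or.inl rfl)
    have := u.injective (h.trans h0.symm)
    omega
  · exact h

/-! ### Inversions and length -/

def invSet (n : ℕ) (u : Equiv.Perm ℕ) : Finset (ℕ × ℕ) :=
  (Finset.range (n+1) ×ˢ Finset.range (n+1)).filter fun p => p.1 < p.2 ∧ u p.2 < u p.1

def len (n : ℕ) (u : Equiv.Perm ℕ) : ℕ := (invSet n u).card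

lemma mem_invSet {n u} {p : ℕ × ℕ} :
    p ∈ invSet n u ↔ p.1 ≤ n ∧ p.2 ≤ n ∧ p.1 < p.2 ∧ u p.2 < u p.1 := by
  simp only [invSet, Finset.mem_filter, Finset.mem_product, Finset.mem_range]
  omega

lemma swap_lt_iff (k a b : ℕ) :
    Equiv.swap k (k+1) a < Equiv.swap k (k+1) b ↔
      ((a = k+1 ∧ b = k) ∨ (¬(a = k ∧ b = k+1) ∧ a < b)) := by
  simp only [Equiv.swap_apply_def]
  split_ifs <;> omega

lemma invSet_swap_mul {n k : ℕ} {u : Equiv.Perm ℕ} (hk : 1 ≤ k) (hk2 : k + 1 ≤ n)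
    (hu : Tame n u) :
    invSet n (Equiv.swap k (k+1) * u) =
      if u⁻¹ k < u⁻¹ (k+1) then insert (u⁻¹ k, u⁻¹ (k+1)) (invSet n u)
      else (invSet n u).erase (u⁻¹ (k+1), u⁻¹ k) := by
  have hinv : Tame n u⁻¹ := hu.inv
  have hik : u⁻¹ k ≤ n := tame_le hinv (by omega)
  have hik1 : u⁻¹ (k+1) ≤ n := tame_le hinv (by omega)
  have hne : u⁻¹ k ≠ u⁻¹ (k+1) := fun h => by
    have := u⁻¹.injective h; omega
  have huk : u (u⁻¹ k) = k := Equiv.Perm.apply_inv_self u k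
  have huk1 : u (u⁻¹ (k+1)) = k + 1 := Equiv.Perm.apply_inv_self u (k+1)
  split_ifs with hlt
  · ext p
    rw [Finset.mem_insert, mem_invSet, mem_invSet]
    constructor
    · rintro ⟨h1, h2, h3, h4⟩
      simp only [Equiv.Perm.mul_apply] at h4
      rw [swap_lt_iff] at h4
      rcases h4 with ⟨ha, hb⟩ | ⟨hne2, h4⟩
      · left
        have e1 : p.1 = u⁻¹ k := by
          apply u.injective; rw [huk, hb]
        have e2 : p.2 = u⁻¹ (k+1) := by
          apply u.injective; rw [huk1, ha]
        exact Prod.ext e1 e2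
      · right; exact ⟨h1, h2, h3, h4⟩
    · rintro (rfl | ⟨h1, h2, h3, h4⟩)
      · refine ⟨hik, hik1, hlt, ?_⟩
        simp only [Equiv.Perm.mul_apply, huk, huk1]
        rw [swap_lt_iff]; left; exact ⟨rfl, rfl⟩
      · refine ⟨h1, h2, h3, ?_⟩
        simp only [Equiv.Perm.mul_apply]
        rw [swap_lt_iff]
        right
        constructor
        · rintro ⟨ha, hb⟩
          have e1 : p.2 = u⁻¹ k := by apply u.injective; rw [huk, ha]
          have e2 : p.1 = u⁻¹ (k+1) := by apply u.injective; rw [huk1, hb]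
          omega
        · exact h4
  · push_neg at hlt
    have hlt' : u⁻¹ (k+1) < u⁻¹ k := by omega
    ext p
    rw [Finset.mem_erase, mem_invSet, mem_invSet]
    constructor
    · rintro ⟨h1, h2, h3, h4⟩
      simp only [Equiv.Perm.mul_apply] at h4
      rw [swap_lt_iff] at h4
      rcases h4 with ⟨ha, hb⟩ | ⟨hne2, h4⟩
      · -- p = (u⁻¹ k, u⁻¹ (k+1)) but then p.1 > p.2, contradiction
        have e1 : p.1 = u⁻¹ k := by apply u.injective; rw [huk, hb]
        have e2 : p.2 = u⁻¹ (k+1) := by apply u.injective; rw [huk1, ha]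
        omega
      · constructor
        · intro hp
          rw [hp] at hne2
          simp only at hne2
          exact hne2 ⟨huk, huk1⟩
        · exact ⟨h1, h2, h3, h4⟩
    · rintro ⟨hpne, h1, h2, h3, h4⟩
      refine ⟨h1, h2, h3, ?_⟩
      simp only [Equiv.Perm.mul_apply]
      rw [swap_lt_iff]
      right
      constructor
      · rintro ⟨ha, hb⟩
        have e1 : p.2 = u⁻¹ k := by apply u.injective; rw [huk, ha]
        have e2 : p.1 = u⁻¹ (k+1) := by apply u.injective; rw [huk1, hb]
        exact hpne (Prod.ext e2 e1)
      · exact h4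

lemma pair_not_mem {n k : ℕ} {u : Equiv.Perm ℕ} :
    (u⁻¹ k, u⁻¹ (k+1)) ∉ invSet n u := by
  rw [mem_invSet]
  simp only [Equiv.Perm.apply_inv_self]
  omega

lemma pair_mem {n k : ℕ} {u : Equiv.Perm ℕ} (hk2 : k + 1 ≤ n) (hu : Tame n u)
    (hlt : u⁻¹ (k+1) < u⁻¹ k) : (u⁻¹ (k+1), u⁻¹ k) ∈ invSet n u := by
  rw [mem_invSet]
  simp only [Equiv.Perm.apply_inv_self]
  have : u⁻¹ k ≤ n := tame_le hu.inv (by omega)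
  have : u⁻¹ (k+1) ≤ n := tame_le hu.inv (by omega)
  omega

lemma len_swap_mul_of_lt {n k : ℕ} {u : Equiv.Perm ℕ} (hk : 1 ≤ k) (hk2 : k + 1 ≤ n)
    (hu : Tame n u) (hlt : u⁻¹ k < u⁻¹ (k+1)) :
    len n (Equiv.swap k (k+1) * u) = len n u + 1 := by
  unfold len
  rw [invSet_swap_mul hk hk2 hu, if_pos hlt, Finset.card_insert_of_notMem pair_not_mem]

lemma len_swap_mul_of_gt {n k : ℕ} {u : Equiv.Perm ℕ} (hk : 1 ≤ k) (hk2 : k + 1 ≤ n)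
    (hu : Tame n u) (hlt : u⁻¹ (k+1) < u⁻¹ k) :
    len n (Equiv.swap k (k+1) * u) = len n u - 1 := by
  unfold len
  rw [invSet_swap_mul hk hk2 hu, if_neg (by omega), Finset.card_erase_of_mem (pair_mem hk2 hu hlt)]

lemma len_swap_mul_le {n k : ℕ} {u : Equiv.Perm ℕ} (hk : 1 ≤ k) (hk2 : k + 1 ≤ n)
    (hu : Tame n u) : len n (Equiv.swap k (k+1) * u) ≤ len n u + 1 := by
  have hne : u⁻¹ k ≠ u⁻¹ (k+1) := fun h => by
    have := (u⁻¹).injective h; omega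
  rcases lt_or_gt_of_ne hne with h | h
  · rw [len_swap_mul_of_lt hk hk2 hu h]
  · rw [len_swap_mul_of_gt hk hk2 hu h]; omega

lemma len_inv {n : ℕ} {u : Equiv.Perm ℕ} (hu : Tame n u) : len n u⁻¹ = len n u := by
  unfold len
  apply Finset.card_nbij' (i := fun p => ((u⁻¹ p.2 : ℕ), (u⁻¹ p.1 : ℕ)))
    (j := fun p => ((u p.2 : ℕ), (u p.1 : ℕ)))
  · intro p hp
    rw [Finset.mem_coe, mem_invSet] at hp ⊢
    obtain ⟨h1, h2, h3, h4⟩ := hp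
    refine ⟨tame_le hu.inv h2, tame_le hu.inv h1, h4, ?_⟩
    simp only [Equiv.Perm.apply_inv_self]
    exact h3
  · intro p hp
    rw [Finset.mem_coe, mem_invSet] at hp ⊢
    obtain ⟨h1, h2, h3, h4⟩ := hp
    refine ⟨tame_le hu h2, tame_le hu h1, ?_, ?_⟩
    · simpa using h4
    · simp only [Equiv.Perm.inv_apply_self]
      exact h3
  · intro p _; simp
  · intro p _; simp

/-! ### Displacement lower bound -/

def Acnt (n : ℕ) (u : Equiv.Perm ℕ) (x : ℕ) : ℕ :=
  (((Finset.range (n+1)).filter fun y => x < y ∧ u y < u x)).card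

lemma len_eq_sum (n : ℕ) (u : Equiv.Perm ℕ) :
    len n u = ∑ x ∈ Finset.range (n+1), Acnt n u x := by
  unfold len
  rw [Finset.card_eq_sum_card_fiberwise (f := Prod.fst) (t := Finset.range (n+1))]
  · apply Finset.sum_congr rfl
    intro x hxr
    simp only [Finset.mem_range] at hxr
    apply Finset.card_nbij' (i := fun p => p.2) (j := fun y => (x, y))
    · intro p hp
      simp only [Finset.mem_coe, Finset.mem_filter, Finset.mem_range] at hp ⊢
      rw [mem_invSet] at hp
      obtain ⟨⟨h1, h2, h3, h4⟩, h5⟩ := hp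
      subst h5
      exact ⟨by omega, h3, h4⟩
    · intro y hy
      simp only [Finset.mem_coe, Finset.mem_filter, Finset.mem_range] at hy
      simp only [Finset.mem_coe, Finset.mem_filter, mem_invSet]
      exact ⟨⟨by omega, by omega, hy.2.1, hy.2.2⟩, trivial⟩
    · intro p hp
      simp only [Finset.mem_coe, Finset.mem_filter] at hp
      rw [← hp.2]
    · intro y _; rfl
  · intro p hp
    rw [Finset.mem_coe, mem_invSet] at hp
    simp only [Finset.mem_coe, Finset.mem_range]
    omega

lemma Acnt_ge {n : ℕ} {u : Equiv.Perm ℕ} (hu : Tame n u) {x : ℕ} (hx : x ≤ n) :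
    u x - x ≤ Acnt n u x := by
  set S := (Finset.range (n+1)).filter (fun y => u y < u x) with hS
  have hcard : S.card = u x := by
    have : S.card = (Finset.range (u x)).card := by
      apply Finset.card_nbij' (i := fun y => u y) (j := fun v => u⁻¹ v)
      · intro y hy
        simp only [hS, Finset.mem_coe, Finset.mem_filter, Finset.mem_range] at hy ⊢
        exact hy.2
      · intro v hv
        simp only [Finset.mem_coe, Finset.mem_range] at hv
        simp only [hS, Finset.mem_coe, Finset.mem_filter, Finset.mem_range, Equiv.Perm.apply_inv_self]
        have hvn : v ≤ n := le_trans (by omega) (tame_le hu hx)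
        exact ⟨by have := tame_le hu.inv hvn; omega, hv⟩
      · intro y _; simp
      · intro v _; simp
    simpa using this
  have hsplit : (S.filter (fun y => x < y)).card + (S.filter (fun y => ¬ x < y)).card = S.card :=
    Finset.card_filter_add_card_filter_not _
  have hbound : (S.filter (fun y => ¬ x < y)).card ≤ x := by
    have hsub : S.filter (fun y => ¬ x < y) ⊆ (Finset.range (x+1)).erase x := by
      intro y hy
      simp only [hS, Finset.mem_filter, Finset.mem_range, not_lt] at hy
      simp only [Finset.mem_erase, Finset.mem_range]
      refine ⟨?_, by omega⟩
      rintro rfl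
      exact absurd hy.1.2 (lt_irrefl _)
    calc (S.filter (fun y => ¬ x < y)).card ≤ ((Finset.range (x+1)).erase x).card :=
          Finset.card_le_card hsub
      _ = x := by rw [Finset.card_erase_of_mem (by simp), Finset.card_range]; omega
  have hA : Acnt n u x = (S.filter (fun y => x < y)).card := by
    unfold Acnt
    rw [hS, Finset.filter_filter]
    congr 1
    ext y
    simp only [Finset.mem_filter]
    tauto
  omega

lemma len_ge_disp {n : ℕ} {u : Equiv.Perm ℕ} (hu : Tame n u) :
    ∑ x ∈ Finset.range (n+1), (u x - x) ≤ len n u := by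
  rw [len_eq_sum]
  apply Finset.sum_le_sum
  intro x hx
  simp only [Finset.mem_range] at hx
  exact Acnt_ge hu (by omega)

/-! ### Positive elements -/

lemma word_cons (n k : ℕ) (L : List ℕ) : word n (k :: L) = σb n k * word n L := by
  simp [word]

lemma word_append (n : ℕ) (L1 L2 : List ℕ) :
    word n (L1 ++ L2) = word n L1 * word n L2 := by
  simp [word]

lemma bpos_word {n : ℕ} (hn : 1 ≤ n) {g : B n} (hg : g ∈ Bpos n) :
    ∃ L : List ℕ, (∀ k ∈ L, 1 ≤ k ∧ k + 1 ≤ n) ∧ g = word n L := by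
  induction hg using Submonoid.closure_induction with
  | mem x hx =>
      obtain ⟨i, h1, h2, rfl⟩ := hx
      exact ⟨[i], by intro k hk; simp at hk; omega, by simp [word]⟩
  | one => exact ⟨[], by simp, by simp [word]⟩
  | mul x y _ _ ihx ihy =>
      obtain ⟨L1, h1, rfl⟩ := ihx
      obtain ⟨L2, h2, rfl⟩ := ihy
      refine ⟨L1 ++ L2, ?_, (word_append n L1 L2).symm⟩
      intro k hk
      rcases List.mem_append.1 hk with h | h
      · exact h1 k h
      · exact h2 k h

lemma len_word_le {n : ℕ} (L : List ℕ) (hL : ∀ k ∈ L, 1 ≤ k ∧ k + 1 ≤ n) :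
    len n (π n (word n L)) ≤ L.length := by
  induction L with
  | nil =>
      have : len n (π n (word n ([] : List ℕ))) = 0 := by
        simp only [word, List.map_nil, List.prod_nil, map_one]
        unfold len invSet
        rw [Finset.card_eq_zero, Finset.filter_eq_empty_iff]
        intro p _
        simp only [Equiv.Perm.one_apply, not_and, not_lt]
        omega
      omega
  | cons k L' ih =>
      have hk := hL k (by simp)
      rw [word_cons, map_mul, π_σb]
      have hsw : sw n k = Equiv.swap k (k+1) := by unfold sw; rw [if_pos hk]
      rw [hsw]
      have := len_swap_mul_le hk.1 hk.2 (tame_pi n (word n L'))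
      have ih' := ih (fun j hj => hL j (by simp [hj]))
      simp only [List.length_cons]
      omega

lemma ee_word_valid {n : ℕ} (L : List ℕ) (hL : ∀ k ∈ L, 1 ≤ k ∧ k + 1 ≤ n) :
    ee n (word n L) = Multiplicative.ofAdd (L.length : ℤ) := by
  induction L with
  | nil => simp [word]
  | cons k L' ih =>
      have hk := hL k (by simp)
      rw [word_cons, map_mul, ee_σb]
      have : ef n k = Multiplicative.ofAdd (1 : ℤ) := by unfold ef; rw [if_pos hk]
      rw [this, ih (fun j hj => hL j (by simp [hj]))]
      simp only [List.length_cons]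
      rw [← ofAdd_add]
      congr 1
      push_cast
      ring

lemma key_S {n i : ℕ} {g : B n} (hn : 3 ≤ n) (hi1 : 1 ≤ i) (hi2 : i + 1 ≤ n)
    (hpos : (σb n i)⁻¹ * g ∈ Bpos n)
    (hee : ee n g = Multiplicative.ofAdd ((n : ℤ) - 1))
    (hw : n - 1 ≤ len n (π n g)) :
    (π n g)⁻¹ (i+1) < (π n g)⁻¹ i := by
  obtain ⟨L, hL, hgL⟩ := bpos_word (by omega) hpos
  have hgdec : g = σb n i * word n L := by
    rw [← hgL]; group
  have hLlen : L.length = n - 2 := by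
    have h1 : ee n g = ee n (σb n i) * ee n (word n L) := by rw [hgdec, map_mul]
    rw [hee, ee_σb, ee_word_valid L hL] at h1
    have hefi : ef n i = Multiplicative.ofAdd (1 : ℤ) := by unfold ef; rw [if_pos ⟨hi1, hi2⟩]
    rw [hefi, ← ofAdd_add] at h1
    have := Multiplicative.ofAdd.injective h1
    omega
  have hswi : sw n i = Equiv.swap i (i+1) := by unfold sw; rw [if_pos ⟨hi1, hi2⟩]
  have hπ : Equiv.swap i (i+1) * π n g = π n (word n L) := by
    rw [hgdec, map_mul, π_σb, hswi, ← mul_assoc]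
    rw [Equiv.swap_mul_self, one_mul]
  have hlenL : len n (π n (word n L)) ≤ n - 2 := hLlen ▸ len_word_le L hL
  set u := π n g with hu
  have htame : Tame n u := tame_pi n g
  have hne : u⁻¹ i ≠ u⁻¹ (i+1) := fun h => by
    have := (u⁻¹).injective h; omega
  rcases lt_or_gt_of_ne hne with h | h
  · exfalso
    have := len_swap_mul_of_lt hi1 hi2 htame h
    rw [hπ] at this
    omega
  · exact h

lemma key_F {n i : ℕ} {g : B n} (hn : 3 ≤ n) (hi1 : 1 ≤ i) (hi2 : i + 1 ≤ n)
    (hpos : g * (σb n i)⁻¹ ∈ Bpos n)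
    (hee : ee n g = Multiplicative.ofAdd ((n : ℤ) - 1))
    (hw : n - 1 ≤ len n (π n g)) :
    π n g (i+1) < π n g i := by
  obtain ⟨L, hL, hgL⟩ := bpos_word (by omega) hpos
  have hgdec : g = word n L * σb n i := by
    rw [← hgL]; group
  have hLlen : L.length = n - 2 := by
    have h1 : ee n g = ee n (word n L) * ee n (σb n i) := by rw [hgdec, map_mul]
    rw [hee, ee_σb, ee_word_valid L hL] at h1
    have hefi : ef n i = Multiplicative.ofAdd (1 : ℤ) := by unfold ef; rw [if_pos ⟨hi1, hi2⟩]
    rw [hefi, ← ofAdd_add] at h1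
    have := Multiplicative.ofAdd.injective h1
    omega
  have hswi : sw n i = Equiv.swap i (i+1) := by unfold sw; rw [if_pos ⟨hi1, hi2⟩]
  have hπ : π n g * Equiv.swap i (i+1) = π n (word n L) := by
    rw [hgdec, map_mul, π_σb, hswi, mul_assoc]
    rw [Equiv.swap_mul_self, mul_one]
  have hlenL : len n (π n (word n L)) ≤ n - 2 := hLlen ▸ len_word_le L hL
  set u := π n g with hu
  have htame : Tame n u := tame_pi n g
  have htinv : Tame n u⁻¹ := htame.inv
  have hswinv : Equiv.swap i (i+1) * u⁻¹ = (π n (word n L))⁻¹ := by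
    rw [← hπ]
    simp [mul_inv_rev, Equiv.swap_inv]
  have hlen2 : len n (Equiv.swap i (i+1) * u⁻¹) ≤ n - 2 := by
    rw [hswinv, len_inv (tame_pi n (word n L))]
    exact hlenL
  have hne : u i ≠ u (i+1) := fun h => by
    have := u.injective h; omega
  rcases lt_or_gt_of_ne hne with h | h
  · exfalso
    have h' : (u⁻¹)⁻¹ i < (u⁻¹)⁻¹ (i+1) := by simpa using h
    have := len_swap_mul_of_lt hi1 hi2 htinv h'
    rw [len_inv htame] at this
    omega
  · exact h

/-! ### nxt and prv -/

def nxt (n : ℕ) : ℕ → List ℕ → ℕ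
  | _, [] => n
  | x, d :: t => if x < d then d else nxt n x t

def prv (t : List ℕ) : ℕ → ℕ
  | 0 => 0
  | x+1 => if x ∈ t then prv t x else x

lemma nxt_nil (n x : ℕ) : nxt n x [] = n := rfl

lemma nxt_cons_lt {n x d : ℕ} (t : List ℕ) (h : x < d) : nxt n x (d :: t) = d := by
  simp [nxt, h]

lemma nxt_cons_ge {n x d : ℕ} (t : List ℕ) (h : ¬ x < d) : nxt n x (d :: t) = nxt n x t := by
  simp [nxt, h]

lemma nxt_gt {n x : ℕ} (t : List ℕ) (h : x < n) : x < nxt n x t := by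
  induction t with
  | nil => exact h
  | cons d t' ih =>
      by_cases hd : x < d
      · rw [nxt_cons_lt t' hd]; exact hd
      · rw [nxt_cons_ge t' hd]; exact ih

lemma nxt_mem {n x : ℕ} (t : List ℕ) : nxt n x t = n ∨ nxt n x t ∈ t := by
  induction t with
  | nil => left; rfl
  | cons d t' ih =>
      by_cases hd : x < d
      · rw [nxt_cons_lt t' hd]; right; simp
      · rw [nxt_cons_ge t' hd]
        rcases ih with h | h
        · left; exact h
        · right; simp [h]

lemma nxt_le {n x i : ℕ} (t : List ℕ) (hp : List.Pairwise (· < ·) t)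
    (hi : i ∈ t) (hxi : x < i) : nxt n x t ≤ i := by
  induction t with
  | nil => simp at hi
  | cons d t' ih =>
      rcases List.pairwise_cons.1 hp with ⟨hd, hp'⟩
      by_cases hxd : x < d
      · rw [nxt_cons_lt t' hxd]
        rcases List.mem_cons.1 hi with rfl | h
        · exact le_refl _
        · exact le_of_lt (hd i h)
      · rw [nxt_cons_ge t' hxd]
        rcases List.mem_cons.1 hi with rfl | h
        · omega
        · exact ih hp' h

lemma prv_lt (t : List ℕ) {x : ℕ} (hx : 1 ≤ x) : prv t x < x := by
  induction x with
  | zero => omega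
  | succ y ih =>
      show prv t (y+1) < y + 1
      rw [prv]
      split_ifs with h
      · rcases Nat.eq_zero_or_pos y with rfl | hy
        · simp [prv]
        · exact lt_trans (ih hy) (by omega)
      · omega

lemma prv_eq_sub_one (t : List ℕ) {x : ℕ} (hx : 1 ≤ x) (h : x - 1 ∉ t) :
    prv t x = x - 1 := by
  obtain ⟨y, rfl⟩ : ∃ y, x = y + 1 := ⟨x - 1, by omega⟩
  rw [prv]
  simp only [Nat.add_sub_cancel] at h ⊢
  rw [if_neg h]

lemma prv_ge {d : ℕ} (t : List ℕ) (hd : d ∉ t) : ∀ {x}, d < x → d ≤ prv t x := by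
  intro x
  induction x with
  | zero => omega
  | succ y ih =>
      intro hdx
      rw [prv]
      split_ifs with h
      · have : d ≠ y := fun e => hd (e ▸ h)
        exact ih (by omega)
      · omega

lemma prv_not_mem (t : List ℕ) (h0 : 0 ∉ t) (x : ℕ) : prv t x ∉ t := by
  induction x with
  | zero => simpa [prv]
  | succ y ih =>
      rw [prv]
      split_ifs with h
      · exact ih
      · exact h

lemma prv_mono (t : List ℕ) : ∀ {x y : ℕ}, x ≤ y → prv t x ≤ prv t y := by
  have step : ∀ y : ℕ, prv t y ≤ prv t (y + 1) := by
    intro y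
    conv_rhs => rw [prv]
    split_ifs with h
    · exact le_refl _
    · rcases Nat.eq_zero_or_pos y with rfl | hy
      · simp [prv]
      · exact le_of_lt (prv_lt t hy)
  intro x y hxy
  induction y with
  | zero => simp_all
  | succ z ih =>
      rcases Nat.lt_or_ge x (z+1) with h | h
      · exact le_trans (ih (by omega)) (step z)
      · have : x = z + 1 := by omega
        subst this; exact le_refl _

lemma prv_cons {d : ℕ} (t : List ℕ) (hd1 : 1 ≤ d) (hdt : ∀ y ∈ t, d < y) :
    ∀ {x}, d < x → prv (d :: t) x = if prv t x = d then d - 1 else prv t x := by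
  intro x
  induction x with
  | zero => omega
  | succ y ih =>
      intro hdx
      by_cases hyd : y = d
      · have h1 : prv (d :: t) (y + 1) = prv (d :: t) y := by
          rw [prv, if_pos (by simp [hyd])]
        have h2 : prv t (y + 1) = y := by
          rw [prv, if_neg (fun h => by have := hdt y h; omega)]
        have h3 : prv (d :: t) y = y - 1 := by
          apply prv_eq_sub_one _ (by omega)
          simp only [List.mem_cons, not_or]
          constructor
          · omega
          · intro h; have := hdt _ h; omega
        rw [h1, h2, h3, if_pos hyd]
        omega
      · -- y ≠ d
        by_cases hyt : y ∈ t
        · have hyd' : d < y := hdt y hyt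
          have h1 : prv (d :: t) (y+1) = prv (d :: t) y := by
            rw [prv, if_pos (by simp [hyt])]
          have h2 : prv t (y+1) = prv t y := by rw [prv, if_pos hyt]
          rw [h1, h2]
          exact ih (by omega)
        · have h1 : prv (d :: t) (y+1) = y := by
            rw [prv, if_neg (by simp [hyt, hyd])]
          have h2 : prv t (y+1) = y := by rw [prv, if_neg hyt]
          rw [h1, h2, if_neg (by omega)]

/-! ### Block permutations -/

lemma descList_cons {a b : ℕ} (hb : 1 ≤ b) (h : b ≤ a) : descList a b = a :: descList (a-1) b := by
  unfold descList
  have h1 : a + 1 - b = (a - b) + 1 := by omega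
  have e1 : b + 1 * (a - b) = a := by omega
  have e2 : a - 1 + 1 - b = a - b := by omega
  rw [h1, List.range'_concat, List.reverse_append, e2]
  simp only [List.reverse_cons, List.reverse_nil, List.nil_append, List.singleton_append, e1]

lemma descList_nil {a b : ℕ} (h : a < b) : descList a b = [] := by
  unfold descList
  have : a + 1 - b = 0 := by omega
  rw [this]
  rfl

lemma block_perm (n : ℕ) : ∀ (b a : ℕ), 1 ≤ a → a ≤ b + 1 → b + 1 ≤ n → ∀ x,
    π n (word n (descList b a)) x
      = if x = a then b + 1 else if a < x ∧ x ≤ b + 1 then x - 1 else x := by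
  intro b
  induction b using Nat.strong_induction_on with
  | _ b ih =>
      intro a ha hab hbn x
      by_cases hba : b < a
      · rw [descList_nil hba]
        have : π n (word n ([] : List ℕ)) = 1 := by simp [word]
        rw [this]
        simp only [Equiv.Perm.one_apply]
        split_ifs <;> omega
      · push_neg at hba
        rw [descList_cons ha hba, word_cons, map_mul, π_σb]
        have hsw : sw n b = Equiv.swap b (b+1) := by
          unfold sw; rw [if_pos ⟨by omega, hbn⟩]
        rw [hsw]
        simp only [Equiv.Perm.mul_apply]
        rw [ih (b-1) (by omega) a ha (by omega) (by omega) x]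
        have hb1 : b - 1 + 1 = b := by omega
        rw [hb1]
        simp only [Equiv.swap_apply_def]
        split_ifs <;> omega

/-! ### The word for δ_D and the explicit formula -/

def bw (n c : ℕ) (l : List ℕ) : List ℕ :=
  (((c :: l).zip (l ++ [n])).map fun p => descList (p.2 - 1) p.1).flatten

lemma bw_nil (n c : ℕ) : bw n c [] = descList (n-1) c := by
  simp [bw]

lemma bw_cons (n c d : ℕ) (t : List ℕ) : bw n c (d :: t) = descList (d-1) c ++ bw n d t := by
  simp [bw]

def gf (n c : ℕ) (l : List ℕ) (x : ℕ) : ℕ :=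
  if x = c ∨ x ∈ l then nxt n x l
  else if c < x ∧ x ≤ n then prv l x else x

lemma gf_marker {n c x : ℕ} (l : List ℕ) (h : x = c ∨ x ∈ l) : gf n c l x = nxt n x l := by
  unfold gf; rw [if_pos h]

lemma gf_mid {n c x : ℕ} (l : List ℕ) (h : ¬(x = c ∨ x ∈ l)) (h2 : c < x) (h3 : x ≤ n) :
    gf n c l x = prv l x := by
  unfold gf; rw [if_neg h, if_pos ⟨h2, h3⟩]

lemma gf_out {n c x : ℕ} (l : List ℕ) (h : ¬(x = c ∨ x ∈ l)) (h2 : ¬(c < x ∧ x ≤ n)) :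
    gf n c l x = x := by
  unfold gf; rw [if_neg h, if_neg h2]

lemma bw_perm (n : ℕ) (l : List ℕ) : ∀ (c : ℕ), 1 ≤ c →
    List.Chain' (· < ·) (c :: (l ++ [n])) →
    ∀ x, π n (word n (bw n c l)) x = gf n c l x := by
  induction l with
  | nil =>
      intro c hc hch x
      have hcn : c < n := by
        rcases hch with _ | _ | ⟨h, _⟩
        exact h
      rw [bw_nil, block_perm n (n-1) c hc (by omega) (by omega) x]
      by_cases hx : x = c
      · rw [gf_marker [] (Or.inl hx), nxt_nil, if_pos hx]
        omega
      · by_cases hx2 : c < x ∧ x ≤ n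
        · rw [gf_mid [] (by simp [hx]) hx2.1 hx2.2,
            prv_eq_sub_one [] (by omega) (by simp), if_neg hx, if_pos (by omega)]
        · rw [gf_out [] (by simp [hx]) hx2, if_neg hx, if_neg (by omega)]
  | cons d t ih =>
      intro c hc hch x
      simp only [List.Chain', List.isChain_iff_pairwise] at hch
      have hch' : List.Pairwise (· < ·) ((d :: t) ++ [n]) := (List.pairwise_cons.1 hch).2
      have hclt : ∀ y ∈ (d :: t) ++ [n], c < y := (List.pairwise_cons.1 hch).1
      have hcd : c < d := hclt d (by simp)
      have hdlt : ∀ y ∈ t ++ [n], d < y := (List.pairwise_cons.1 hch').1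
      have hdn : d < n := hdlt n (by simp)
      have htd : ∀ y ∈ t, d < y := fun y hy => hdlt y (by simp [hy])
      have htn : ∀ y ∈ t, y < n := by
        intro y hy
        have hp := (List.pairwise_cons.1 hch').2
        rcases List.pairwise_append.1 hp with ⟨_, _, hcross⟩
        exact hcross y hy n (by simp)
      have hpt : List.Pairwise (· < ·) t := by
        have hp := (List.pairwise_cons.1 hch').2
        rcases List.pairwise_append.1 hp with ⟨h, _, _⟩
        exact h
      have ht0 : (0 : ℕ) ∉ t := fun h => by have := htd 0 h; omega
      have hIH := ih d (by omega) (List.isChain_iff_pairwise.2 hch') x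
      rw [bw_cons, word_append, map_mul]
      simp only [Equiv.Perm.mul_apply]
      rw [hIH]
      have hBlock := block_perm n (d-1) c hc (by omega) (by omega)
      have hd1 : d - 1 + 1 = d := by omega
      -- case analysis on x
      by_cases hx1 : x = c
      · -- x = c
        have hL : gf n d t c = c := by
          rw [gf_out t (by push_neg; exact ⟨by omega, fun h => by have := htd c h; omega⟩)
            (by omega)]
        rw [hx1, hL, hBlock c, if_pos rfl, hd1,
          gf_marker (d :: t) (Or.inl rfl), nxt_cons_lt t hcd]
      · by_cases hx2 : x = d
        · have hL : gf n d t d = nxt n d t := gf_marker t (Or.inl rfl)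
          have hgt : d < nxt n d t := nxt_gt t hdn
          rw [hx2, hL, hBlock _, if_neg (by omega), if_neg (by omega),
            gf_marker (d :: t) (Or.inr (by simp)), nxt_cons_ge t (by omega)]
        · by_cases hx3 : x ∈ t
          · have hxd : d < x := htd x hx3
            have hxn : x < n := htn x hx3
            have hL : gf n d t x = nxt n x t := gf_marker t (Or.inr hx3)
            have hgt : x < nxt n x t := nxt_gt t hxn
            rw [hL, hBlock _, if_neg (by omega), if_neg (by omega),
              gf_marker (d :: t) (Or.inr (by simp [hx3])), nxt_cons_ge t (by omega)]
          · -- x not a marker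
            have hnm : ¬(x = d ∨ x ∈ t) := by simp [hx2, hx3]
            have hnm' : ¬(x = c ∨ x ∈ d :: t) := by simp [hx1, hx2, hx3]
            by_cases hx4 : c < x ∧ x ≤ n
            · by_cases hx5 : x < d
              · -- c < x < d
                have hL : gf n d t x = x := gf_out t hnm (by omega)
                rw [hL, hBlock _, if_neg hx1, if_pos (by omega),
                  gf_mid (d :: t) hnm' hx4.1 hx4.2,
                  prv_eq_sub_one (d :: t) (by omega) ?h1]
                case h1 =>
                  simp only [List.mem_cons, not_or]
                  exact ⟨by omega, fun h => by have := htd _ h; omega⟩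
              · -- d < x, x ∉ t
                have hdx : d < x := by omega
                have hL : gf n d t x = prv t x := gf_mid t hnm hdx hx4.2
                set y := prv t x with hy
                have hylt : y < x := prv_lt t (by omega)
                have hyd : d ≤ y := prv_ge t (fun h => by have := htd d h; omega) hdx
                have hynt : y ∉ t := prv_not_mem t ht0 x
                have hcons := prv_cons (t := t) (by omega) htd hdx
                rw [hL, gf_mid (d :: t) hnm' hx4.1 hx4.2, hcons]
                by_cases hyd2 : y = d
                · rw [hBlock _, if_neg (by omega), if_pos (by omega), if_pos (by rw [← hy, hyd2]), hyd2]
                · rw [hBlock _, if_neg (by omega), if_neg (by omega), if_neg (by rw [← hy]; exact hyd2)]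
            · -- x < c or x > n
              have hL : gf n d t x = x := by
                apply gf_out t hnm
                push_neg
                intro h
                have : ∀ y ∈ t, y < n := htn
                omega
              rw [hL, hBlock _, if_neg hx1, if_neg (by omega),
                gf_out (d :: t) hnm' hx4]

/-! ### Word length and letter bounds for bw -/

lemma descList_mem {a b k : ℕ} (h : k ∈ descList a b) : b ≤ k ∧ k ≤ a := by
  unfold descList at h
  rw [List.mem_reverse, List.mem_range'] at h
  obtain ⟨i, hi, rfl⟩ := h
  omega

lemma descList_length (a b : ℕ) : (descList a b).length = a + 1 - b := by
  unfold descList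
  rw [List.length_reverse, List.length_range']

lemma bw_letters (n : ℕ) (l : List ℕ) : ∀ (c : ℕ), 1 ≤ c →
    List.Chain' (· < ·) (c :: (l ++ [n])) →
    ∀ k ∈ bw n c l, 1 ≤ k ∧ k + 1 ≤ n := by
  induction l with
  | nil =>
      intro c hc hch k hk
      have hcn : c < n := by rcases hch with _ | _ | ⟨h, _⟩; exact h
      rw [bw_nil] at hk
      have := descList_mem hk
      omega
  | cons d t ih =>
      intro c hc hch k hk
      simp only [List.Chain', List.isChain_iff_pairwise] at hch
      have hch' : List.Pairwise (· < ·) ((d :: t) ++ [n]) := (List.pairwise_cons.1 hch).2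
      have hcd : c < d := (List.pairwise_cons.1 hch).1 d (by simp)
      have hdn : d < n := (List.pairwise_cons.1 hch').1 n (by simp)
      rw [bw_cons] at hk
      rcases List.mem_append.1 hk with h | h
      · have := descList_mem h
        omega
      · exact ih d (by omega) (List.isChain_iff_pairwise.2 hch') k h

lemma bw_length (n : ℕ) (l : List ℕ) : ∀ (c : ℕ), 1 ≤ c →
    List.Chain' (· < ·) (c :: (l ++ [n])) →
    (bw n c l).length = n - c := by
  induction l with
  | nil =>
      intro c hc hch
      have hcn : c < n := by rcases hch with _ | _ | ⟨h, _⟩; exact h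
      rw [bw_nil, descList_length]
      omega
  | cons d t ih =>
      intro c hc hch
      simp only [List.Chain', List.isChain_iff_pairwise] at hch
      have hch' : List.Pairwise (· < ·) ((d :: t) ++ [n]) := (List.pairwise_cons.1 hch).2
      have hcd : c < d := (List.pairwise_cons.1 hch).1 d (by simp)
      have hdn : d < n := (List.pairwise_cons.1 hch').1 n (by simp)
      rw [bw_cons, List.length_append, descList_length,
        ih d (by omega) (List.isChain_iff_pairwise.2 hch')]
      omega

/-! ### Sum of displacements -/

lemma sum_nxt (n : ℕ) (l : List ℕ) : ∀ (c : ℕ),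
    List.Chain' (· < ·) (c :: (l ++ [n])) →
    ∑ x ∈ (c :: l).toFinset, (nxt n x l - x) = n - c := by
  induction l with
  | nil =>
      intro c hch
      simp [nxt_nil]
  | cons d t ih =>
      intro c hch
      simp only [List.Chain', List.isChain_iff_pairwise] at hch
      have hch' : List.Pairwise (· < ·) ((d :: t) ++ [n]) := (List.pairwise_cons.1 hch).2
      have hclt : ∀ y ∈ (d :: t) ++ [n], c < y := (List.pairwise_cons.1 hch).1
      have hcd : c < d := hclt d (by simp)
      have hdn : d < n := (List.pairwise_cons.1 hch').1 n (by simp)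
      have htd : ∀ y ∈ t, d < y := fun y hy => (List.pairwise_cons.1 hch').1 y (by simp [hy])
      have hcm : c ∉ (d :: t).toFinset := by
        simp only [List.mem_toFinset, List.mem_cons, not_or]
        exact ⟨by omega, fun h => by have := htd c h; have := hclt c (by simp [h]); omega⟩
      have hstep : (c :: d :: t).toFinset = insert c (d :: t).toFinset := by
        simp [List.toFinset_cons]
      rw [hstep, Finset.sum_insert hcm, nxt_cons_lt t hcd]
      have hrest : ∑ x ∈ (d :: t).toFinset, (nxt n x (d :: t) - x)
          = ∑ x ∈ (d :: t).toFinset, (nxt n x t - x) := by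
        apply Finset.sum_congr rfl
        intro x hx
        simp only [List.mem_toFinset, List.mem_cons] at hx
        have hdx : ¬ x < d := by
          rcases hx with rfl | hx
          · omega
          · have := htd x hx; omega
        rw [nxt_cons_ge t hdx]
      rw [hrest, ih d (List.isChain_iff_pairwise.2 hch')]
      omega

lemma len_ge (n : ℕ) (l : List ℕ) (hch : List.Chain' (· < ·) (1 :: (l ++ [n]))) :
    n - 1 ≤ len n (π n (word n (bw n 1 l))) := by
  have hform := bw_perm n l 1 (le_refl 1) hch
  have htame : Tame n (π n (word n (bw n 1 l))) := tame_pi n _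
  have hle := len_ge_disp htame
  set u := π n (word n (bw n 1 l)) with hu
  -- facts about markers
  simp only [List.Chain', List.isChain_iff_pairwise] at hch
  have h1lt : ∀ y ∈ (l ++ [n]), 1 < y := (List.pairwise_cons.1 hch).1
  have hln : ∀ y ∈ l, y < n := by
    intro y hy
    rcases List.pairwise_append.1 (List.pairwise_cons.1 hch).2 with ⟨_, _, hcross⟩
    exact hcross y hy n (by simp)
  have h1n : 1 < n := h1lt n (by simp)
  have hsub : (1 :: l).toFinset ⊆ Finset.range (n+1) := by
    intro x hx
    simp only [List.mem_toFinset, List.mem_cons] at hx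
    simp only [Finset.mem_range]
    rcases hx with rfl | hx
    · omega
    · have := hln x hx; omega
  have hmark : ∑ x ∈ (1 :: l).toFinset, (u x - x) = n - 1 := by
    rw [← sum_nxt n l 1 (List.isChain_iff_pairwise.2 hch)]
    apply Finset.sum_congr rfl
    intro x hx
    simp only [List.mem_toFinset, List.mem_cons] at hx
    rw [hform x, gf_marker l (by tauto)]
  have : ∑ x ∈ (1 :: l).toFinset, (u x - x) ≤ ∑ x ∈ Finset.range (n+1), (u x - x) :=
    Finset.sum_le_sum_of_subset hsub
  omega

/-! ### Descent analysis -/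

lemma chain_facts {n : ℕ} {l : List ℕ} (hch : List.Chain' (· < ·) (1 :: (l ++ [n]))) :
    (∀ y ∈ l, 1 < y) ∧ (∀ y ∈ l, y < n) ∧ List.Pairwise (· < ·) l ∧ 1 < n := by
  simp only [List.Chain', List.isChain_iff_pairwise] at hch
  have h1lt : ∀ y ∈ (l ++ [n]), 1 < y := (List.pairwise_cons.1 hch).1
  rcases List.pairwise_append.1 (List.pairwise_cons.1 hch).2 with ⟨hpl, _, hcross⟩
  exact ⟨fun y hy => h1lt y (by simp [hy]),
    fun y hy => hcross y hy n (by simp), hpl, h1lt n (by simp)⟩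

lemma F_side {n i : ℕ} {l : List ℕ} (hch : List.Chain' (· < ·) (1 :: (l ++ [n])))
    (hi1 : 1 ≤ i) (hi2 : i + 1 ≤ n)
    (hdes : π n (word n (bw n 1 l)) (i+1) < π n (word n (bw n 1 l)) i) :
    (i = 1 ∨ i ∈ l) ∧ ¬(i + 1 = 1 ∨ i + 1 ∈ l) := by
  obtain ⟨h1l, hln, hpl, h1n⟩ := chain_facts hch
  have hform := bw_perm n l 1 (le_refl 1) hch
  set w := π n (word n (bw n 1 l)) with hw
  have hmark : i = 1 ∨ i ∈ l := by
    by_contra hnm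
    have h2i : 1 < i := by
      rcases not_or.1 hnm with ⟨h, _⟩; omega
    have hwi : w i = prv l i := by rw [hform i, gf_mid l hnm h2i (by omega)]
    have hprlt : prv l i < i := prv_lt l (by omega)
    by_cases hm1 : i + 1 = 1 ∨ i + 1 ∈ l
    · have hmem : i + 1 ∈ l := Or.resolve_left hm1 (by omega)
      have hwi1 : w (i+1) = nxt n (i+1) l := by rw [hform (i+1), gf_marker l hm1]
      have hgt : i + 1 < nxt n (i+1) l := nxt_gt l (hln (i+1) hmem)
      omega
    · have hwi1 : w (i+1) = prv l (i+1) := by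
        rw [hform (i+1), gf_mid l hm1 (by omega) (by omega)]
      have : prv l (i+1) = i := by
        apply prv_eq_sub_one l (by omega)
        simpa using (not_or.1 hnm).2
      omega
  refine ⟨hmark, ?_⟩
  intro hm1
  have hi1l : i + 1 ∈ l := Or.resolve_left hm1 (by omega)
  have hwi1 : w (i+1) = nxt n (i+1) l := by rw [hform (i+1), gf_marker l hm1]
  have hgt : i + 1 < nxt n (i+1) l := nxt_gt l (hln (i+1) hi1l)
  have hwi : w i = nxt n i l := by rw [hform i, gf_marker l hmark]
  have hle : nxt n i l ≤ i + 1 := nxt_le l hpl hi1l (by omega)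
  omega

lemma S_side {n i : ℕ} {l : List ℕ} (hch : List.Chain' (· < ·) (1 :: (l ++ [n])))
    (hi1 : 1 ≤ i) (hi2 : i + 1 ≤ n)
    (hdes : (π n (word n (bw n 1 l)))⁻¹ (i+1) < (π n (word n (bw n 1 l)))⁻¹ i) :
    i ∉ l ∧ (i + 1 ∈ l ∨ i + 1 = n) := by
  obtain ⟨h1l, hln, hpl, h1n⟩ := chain_facts hch
  have hform := bw_perm n l 1 (le_refl 1) hch
  set w := π n (word n (bw n 1 l)) with hw
  have htame : Tame n w := tame_pi n _
  have h0l : (0 : ℕ) ∉ l := fun h => by have := h1l 0 h; omega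
  set a := w⁻¹ i with ha
  set b := w⁻¹ (i+1) with hb
  have hwa : w a = i := Equiv.Perm.apply_inv_self w i
  have hwb : w b = i + 1 := Equiv.Perm.apply_inv_self w (i+1)
  have han : a ≤ n := tame_le htame.inv (by omega)
  have hbn : b ≤ n := tame_le htame.inv (by omega)
  have ha1 : 1 ≤ a := tame_pos htame.inv hi1 (by omega)
  have hb1 : 1 ≤ b := tame_pos htame.inv (by omega) (by omega)
  have hil : i ∉ l := by
    intro hil
    have hna : a = 1 ∨ a ∈ l := by
      by_contra h
      have h2a : 1 < a := by rcases not_or.1 h with ⟨h', _⟩; omega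
      have he : w a = prv l a := by rw [hform a, gf_mid l h h2a han]
      have hnm : prv l a ∉ l := prv_not_mem l h0l a
      rw [hwa] at he
      exact hnm (he ▸ hil)
    have h' : w a = nxt n a l := (hform a).trans (gf_marker l hna)
    have hwa' : nxt n a l = i := by rw [← h', hwa]
    have han' : a < n := by
      rcases hna with h | h
      · omega
      · exact hln a h
    have hai : a < i := by
      have := nxt_gt (n := n) l han' (x := a)
      omega
    by_cases hnb : b = 1 ∨ b ∈ l
    · have h'' : w b = nxt n b l := (hform b).trans (gf_marker l hnb)
      have hwb' : nxt n b l = i + 1 := by rw [← h'', hwb]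
      by_cases hbi : b < i
      · have := nxt_le (n := n) l hpl hil hbi
        omega
      · omega
    · have h2b : 1 < b := by rcases not_or.1 hnb with ⟨h', _⟩; omega
      have he : w b = prv l b := by rw [hform b, gf_mid l hnb h2b hbn]
      have hlt := prv_lt l (x := b) (by omega)
      omega
  refine ⟨hil, ?_⟩
  by_contra h
  obtain ⟨h1, h2⟩ := not_or.1 h
  have hna : ¬(a = 1 ∨ a ∈ l) := by
    intro hm
    have h' : w a = nxt n a l := (hform a).trans (gf_marker l hm)
    rcases nxt_mem (n := n) (x := a) l with he | he
    · rw [hwa] at h'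
      omega
    · rw [hwa] at h'
      exact hil (h' ▸ he)
  have h2a : 1 < a := by rcases not_or.1 hna with ⟨h', _⟩; omega
  have hea : prv l a = i := by
    have h' : w a = prv l a := by rw [hform a, gf_mid l hna h2a han]
    rw [← h', hwa]
  have hnb : ¬(b = 1 ∨ b ∈ l) := by
    intro hm
    have h' : w b = nxt n b l := (hform b).trans (gf_marker l hm)
    rcases nxt_mem (n := n) (x := b) l with he | he
    · rw [hwb] at h'
      omega
    · rw [hwb] at h'
      exact h1 (h' ▸ he)
  have h2b : 1 < b := by rcases not_or.1 hnb with ⟨h', _⟩; omega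
  have heb : prv l b = i + 1 := by
    have h' : w b = prv l b := by rw [hform b, gf_mid l hnb h2b hbn]
    rw [← h', hwb]
  have := prv_mono l (x := b) (y := a) (by omega)
  omega

end S2

/-- `S(δ_{d_1,…,d_m}) ∩ F(δ_{d_1,…,d_m}) = ∅`. -/
theorem statement2 (n : ℕ) (hn : 3 ≤ n) (l : List ℕ)
    (hl : List.Chain' (· < ·) (1 :: (l ++ [n]))) :
    startSet n (deltaD n l) ∩ finishSet n (deltaD n l) = ∅ := by
  ext i
  simp only [Set.mem_inter_iff, Set.mem_empty_iff_false, iff_false, not_and]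
  intro hS hF
  simp only [startSet, Set.mem_setOf_eq] at hS
  simp only [finishSet, Set.mem_setOf_eq] at hF
  obtain ⟨hi1, hi2, hble⟩ := hS
  obtain ⟨_, _, hbge⟩ := hF
  have hi2' : i + 1 ≤ n := by omega
  have hdd : deltaD n l = word n (S2.bw n 1 l) := rfl
  have hee : S2.ee n (deltaD n l) = Multiplicative.ofAdd ((n : ℤ) - 1) := by
    rw [hdd, S2.ee_word_valid _ (S2.bw_letters n l 1 le_rfl hl), S2.bw_length n l 1 le_rfl hl]
    congr 1
    omega
  have hw : n - 1 ≤ S2.len n (S2.π n (deltaD n l)) := by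
    rw [hdd]; exact S2.len_ge n l hl
  have hble' : (σb n i)⁻¹ * deltaD n l ∈ Bpos n := hble
  have hbge' : deltaD n l * (σb n i)⁻¹ ∈ Bpos n := hbge
  have h1 := S2.key_S hn hi1 hi2' hble' hee hw
  have h2 := S2.key_F hn hi1 hi2' hbge' hee hw
  rw [hdd] at h1 h2
  obtain ⟨hm, hnm⟩ := S2.F_side hl hi1 hi2' h2
  obtain ⟨hnl, hm1⟩ := S2.S_side hl hi1 hi2' h1
  have hieq : i = 1 := by
    rcases hm with h | h
    · exact h
    · exact absurd h hnl
  subst hieq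
  rcases hm1 with h | h
  · exact hnm (Or.inr h)
  · omega
end

section
/- Let n ≥ 2 and i,j ∈ {1,…,n−1}. Then α_{i,j} is a simple element of B_n with S(α_{i,j}) = {i} and F(α_{i,j}) = {j}. -/
namespace Scratch
variable {n : ℕ}
lemma rel_one {r : FreeGroup ℕ} (hr : r ∈ braidRels n) : PresentedGroup.mk (braidRels n) r = 1 :=
  (QuotientGroup.eq_one_iff r).2 (Subgroup.subset_normalClosure hr)
lemma braid_rel {i : ℕ} (h1 : 1 ≤ i) (h2 : i + 2 ≤ n) :
    σb n i * σb n (i+1) * σb n i = σb n (i+1) * σb n i * σb n (i+1) := by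
  have := rel_one (n := n) (r := FreeGroup.of i * FreeGroup.of (i + 1) * FreeGroup.of i *
              (FreeGroup.of (i + 1) * FreeGroup.of i * FreeGroup.of (i + 1))⁻¹)
    (Or.inl ⟨i, h1, h2, rfl⟩)
  simp only [map_mul, map_inv, mul_inv_eq_one] at this
  exact this
lemma comm_rel {i j : ℕ} (h1 : 1 ≤ i) (h2 : i + 2 ≤ j) (h3 : j + 1 ≤ n) :
    σb n i * σb n j = σb n j * σb n i := by
  have := rel_one (n := n) (r := FreeGroup.of i * FreeGroup.of j *
    (FreeGroup.of j * FreeGroup.of i)⁻¹) (Or.inr (Or.inl ⟨i, j, h1, h2, h3, rfl⟩))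
  simp only [map_mul, map_inv, mul_inv_eq_one] at this
  exact this
lemma sigma_out {i : ℕ} (h : i = 0 ∨ n ≤ i) : σb n i = 1 :=
  rel_one (n := n) (r := FreeGroup.of i) (Or.inr (Or.inr ⟨i, h, rfl⟩))
lemma comm_any {a b : ℕ} (h : a + 2 ≤ b) : σb n a * σb n b = σb n b * σb n a := by
  rcases Nat.eq_zero_or_pos a with ha | ha
  · rw [sigma_out (Or.inl ha)]; rw [one_mul, mul_one]
  rcases le_or_gt (b+1) n with hb | hb
  · exact comm_rel ha h hb
  · rw [sigma_out (n := n) (i := b) (Or.inr (by omega))]; rw [one_mul, mul_one]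
lemma word_nil : word n [] = 1 := rfl
lemma word_cons (a : ℕ) (l : List ℕ) : word n (a :: l) = σb n a * word n l := by simp [word]
lemma word_append (l₁ l₂ : List ℕ) : word n (l₁ ++ l₂) = word n l₁ * word n l₂ := by simp [word]
lemma word_singleton (a : ℕ) : word n [a] = σb n a := by simp [word]
lemma sigma_mem_bpos {i : ℕ} (h1 : 1 ≤ i) (h2 : i ≤ n - 1) : σb n i ∈ Bpos n :=
  Submonoid.subset_closure ⟨i, h1, h2, rfl⟩
lemma word_mem_bpos {l : List ℕ} (h : ∀ x ∈ l, 1 ≤ x ∧ x ≤ n - 1) : word n l ∈ Bpos n := by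
  induction l with
  | nil => exact one_mem _
  | cons a t ih =>
      rw [word_cons]
      exact mul_mem (sigma_mem_bpos (h a (by simp)).1 (h a (by simp)).2)
        (ih fun x hx => h x (by simp [hx]))
lemma comm_word {k : ℕ} {l : List ℕ} (h : ∀ x ∈ l, k + 2 ≤ x ∨ x + 2 ≤ k) :
    word n l * σb n k = σb n k * word n l := by
  induction l with
  | nil => rw [word_nil, one_mul, mul_one]
  | cons a t ih =>
      have ha : σb n a * σb n k = σb n k * σb n a := by
        rcases h a (by simp) with h' | h'
        · exact (comm_any h').symm
        · exact comm_any h'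
      rw [word_cons, mul_assoc, ih (fun x hx => h x (by simp [hx])), ← mul_assoc, ha, mul_assoc]

lemma range_split {t k : ℕ} (h1 : 1 ≤ k) (h2 : k < t) :
    List.range' 1 t = List.range' 1 (k-1) ++ ([k, k+1] ++ List.range' (k+2) (t-k-1)) := by
  have hl : ([k, k+1] : List ℕ) = List.range' k 2 := by simp [List.range'_succ]
  rw [hl, List.range'_append_1,
    show List.range' k (2+(t-k-1)) = List.range' (1+(k-1)) (2+(t-k-1)) from by
      rw [show 1+(k-1)=k from by omega],
    List.range'_append_1, show k-1+(2+(t-k-1)) = t from by omega]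

/-- `A_t σ_k = σ_{k+1} A_t` for `1 ≤ k ≤ t-1`, `t ≤ n-1`. -/
lemma LA {t k : ℕ} (h1 : 1 ≤ k) (h2 : k < t) (h3 : t ≤ n - 1) :
    word n (List.range' 1 t) * σb n k = σb n (k+1) * word n (List.range' 1 t) := by
  have hn : k + 2 ≤ n := by omega
  have hs := range_split h1 h2
  rw [hs, word_append, word_append]
  have hS : word n (List.range' (k+2) (t-k-1)) * σb n k = σb n k * word n (List.range' (k+2) (t-k-1)) :=
    comm_word (fun x hx => Or.inl (by simp [List.mem_range'_1] at hx; omega))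
  have hP : word n (List.range' 1 (k-1)) * σb n (k+1) = σb n (k+1) * word n (List.range' 1 (k-1)) :=
    comm_word (fun x hx => Or.inr (by simp [List.mem_range'_1] at hx; omega))
  have hkk : word n [k, k+1] = σb n k * σb n (k+1) := by simp [word]
  calc word n (List.range' 1 (k-1)) * (word n [k,k+1] * word n (List.range' (k+2) (t-k-1))) * σb n k
      = word n (List.range' 1 (k-1)) * (σb n k * σb n (k+1) * σb n k) * word n (List.range' (k+2) (t-k-1)) := by
        rw [hkk]; rw [mul_assoc, mul_assoc, hS]; group
    _ = word n (List.range' 1 (k-1)) * (σb n (k+1) * σb n k * σb n (k+1)) * word n (List.range' (k+2) (t-k-1)) := by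
        rw [braid_rel h1 hn]
    _ = σb n (k+1) * (word n (List.range' 1 (k-1)) * (word n [k,k+1] * word n (List.range' (k+2) (t-k-1)))) := by
        rw [hkk]
        have := hP
        rw [← mul_assoc, ← mul_assoc, hP]; group

/-- `σ_k D_t = D_t σ_{k+1}` for `1 ≤ k ≤ t-1`, `t ≤ n-1`, where `D_t = σ_t ⋯ σ_1`. -/
lemma LD {t k : ℕ} (h1 : 1 ≤ k) (h2 : k < t) (h3 : t ≤ n - 1) :
    σb n k * word n (List.range' 1 t).reverse = word n (List.range' 1 t).reverse * σb n (k+1) := by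
  have hn : k + 2 ≤ n := by omega
  have hs := range_split (t := t) h1 h2
  rw [hs]
  simp only [List.reverse_append]
  rw [word_append, word_append, mul_assoc]
  have hS : word n (List.range' (k+2) (t-k-1)).reverse * σb n k
      = σb n k * word n (List.range' (k+2) (t-k-1)).reverse :=
    comm_word (fun x hx => Or.inl (by simp [List.mem_range'_1] at hx; omega))
  have hP : word n (List.range' 1 (k-1)).reverse * σb n (k+1)
      = σb n (k+1) * word n (List.range' 1 (k-1)).reverse :=
    comm_word (fun x hx => Or.inr (by simp [List.mem_range'_1] at hx; omega))
  have hkk : word n ([k, k+1] : List ℕ).reverse = σb n (k+1) * σb n k := by simp [word]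
  calc σb n k * (word n (List.range' (k+2) (t-k-1)).reverse * (word n ([k,k+1]:List ℕ).reverse * word n (List.range' 1 (k-1)).reverse))
      = word n (List.range' (k+2) (t-k-1)).reverse * ((σb n k * σb n (k+1) * σb n k) * word n (List.range' 1 (k-1)).reverse) := by
        rw [hkk, ← mul_assoc, ← hS]; group
    _ = word n (List.range' (k+2) (t-k-1)).reverse * ((σb n (k+1) * σb n k * σb n (k+1)) * word n (List.range' 1 (k-1)).reverse) := by
        rw [braid_rel h1 hn]
    _ = word n (List.range' (k+2) (t-k-1)).reverse * (word n ([k,k+1]:List ℕ).reverse * word n (List.range' 1 (k-1)).reverse) * σb n (k+1) := by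
        rw [hkk, mul_assoc (σb n (k+1) * σb n k), ← hP]; group
end Scratch

namespace Scratch
variable {n : ℕ}

lemma map_shift_range' (s c : ℕ) : (List.range' s c).map (·+1) = List.range' (s+1) c := by
  have : ((·+1) : ℕ → ℕ) = (1+·) := by funext x; omega
  rw [this, List.map_add_range', Nat.add_comm]

lemma LAword {t : ℕ} (ht : t ≤ n - 1) {l : List ℕ} (h : ∀ x ∈ l, 1 ≤ x ∧ x < t) :
    word n (List.range' 1 t) * word n l = word n (l.map (·+1)) * word n (List.range' 1 t) := by
  induction l with
  | nil => simp [word_nil]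
  | cons a l ih =>
      rw [word_cons, List.map_cons, word_cons, ← mul_assoc,
        LA (h a (by simp)).1 (h a (by simp)).2 ht, mul_assoc,
        ih (fun x hx => h x (by simp [hx])), ← mul_assoc]

lemma LDword {t : ℕ} (ht : t ≤ n - 1) {l : List ℕ} (h : ∀ x ∈ l, 1 ≤ x ∧ x < t) :
    word n l * word n (List.range' 1 t).reverse
      = word n (List.range' 1 t).reverse * word n (l.map (·+1)) := by
  induction l with
  | nil => simp [word_nil]
  | cons a l ih =>
      rw [word_cons, List.map_cons, word_cons, mul_assoc,
        ih (fun x hx => h x (by simp [hx])), ← mul_assoc,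
        LD (h a (by simp)).1 (h a (by simp)).2 ht, mul_assoc]

/-- the word for `Δ`-type products -/
def Wlist (m : ℕ) : List ℕ := ((List.range' 1 (m-1)).map fun t => (List.range' 1 t).reverse).flatten

lemma mem_Wlist {m x : ℕ} (hx : x ∈ Wlist m) : 1 ≤ x ∧ x ≤ m - 1 := by
  simp only [Wlist, List.mem_flatten, List.mem_map] at hx
  obtain ⟨_, ⟨t, ht, rfl⟩, hx⟩ := hx
  simp only [List.mem_reverse, List.mem_range'_1] at hx
  simp only [List.mem_range'_1] at ht
  omega

lemma Wlist_succ {m : ℕ} (hm : 1 ≤ m) :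
    Wlist (m+1) = Wlist m ++ (List.range' 1 m).reverse := by
  have : List.range' 1 ((m+1)-1) = List.range' 1 (m-1) ++ [m] := by
    have := List.range'_concat (step := 1) (s := 1) (n := m-1)
    rw [show 1+1*(m-1) = m from by omega] at this
    rw [show (m+1)-1 = (m-1)+1 from by omega, this]
  simp only [Wlist, this, List.map_append, List.flatten_append]
  simp

/-- Fundamental commutation: `W_m D_m = A_m W_m`. -/
lemma GWD : ∀ m, 1 ≤ m → m ≤ n - 1 →
    word n (Wlist m) * word n (List.range' 1 m).reverse
      = word n (List.range' 1 m) * word n (Wlist m) := by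
  intro m
  induction m with
  | zero => omega
  | succ m ih =>
      intro _ hm1
      rcases Nat.eq_zero_or_pos m with rfl | hm
      · simp [Wlist, word_nil]
      have ihm := ih hm (by omega)
      rw [Wlist_succ hm, word_append]
      calc word n (Wlist m) * word n (List.range' 1 m).reverse * word n (List.range' 1 (m+1)).reverse
          = word n (List.range' 1 m) * word n (Wlist m) * word n (List.range' 1 (m+1)).reverse := by
            rw [ihm]
        _ = word n (List.range' 1 m) * (word n (List.range' 1 (m+1)).reverse
              * word n ((Wlist m).map (·+1))) := by
            rw [mul_assoc, LDword hm1 (fun x hx => by have := mem_Wlist hx; omega)]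
        _ = word n (List.range' 1 (m+1)) * (word n (List.range' 1 m).reverse
              * word n ((Wlist m).map (·+1))) := by
            rw [← mul_assoc, ← mul_assoc, ← word_append, ← word_append]
            have hl : List.range' 1 m ++ (List.range' 1 (m+1)).reverse
                = List.range' 1 (m+1) ++ (List.range' 1 m).reverse := by
              have hc : List.range' 1 (m+1) = List.range' 1 m ++ [1+m] := by
                have := List.range'_concat (step := 1) (s := 1) (n := m)
                rw [show 1*m = m from by omega] at this
                exact this
              rw [hc]
              simp
            rw [hl, word_append, word_append]
        _ = word n (List.range' 1 (m+1)) * (word n (Wlist m) * word n (List.range' 1 m).reverse) := by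
            rw [LDword (by omega) (fun x hx => by have := mem_Wlist hx; omega)]

/-- ascending runs divide Δ-words -/
lemma AscMain : ∀ m, 1 ≤ m → m ≤ n - 1 → ∀ i, 1 ≤ i → i ≤ m →
    ∃ p ∈ Bpos n, word n (Wlist (m+1)) = word n (List.range' i (m+1-i)) * p := by
  intro m
  induction m with
  | zero => omega
  | succ m ih =>
      intro _ hm1 i hi1 hi2
      rcases Nat.eq_zero_or_pos m with rfl | hm
      · -- m+1 = 1, i = 1
        have : i = 1 := by omega
        subst this
        refine ⟨1, one_mem _, ?_⟩
        rw [mul_one]; rfl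
      -- word (Wlist (m+2)) = A(m+1) * word (Wlist (m+1))
      have key : word n (Wlist (m+1+1)) = word n (List.range' 1 (m+1)) * word n (Wlist (m+1)) := by
        rw [Wlist_succ (by omega), word_append, GWD (m+1) (by omega) hm1]
      rcases Nat.eq_or_lt_of_le hi1 with rfl | hi1'
      · exact ⟨word n (Wlist (m+1)), word_mem_bpos (fun x hx => by have := mem_Wlist hx; omega),
          by rw [key, show m+1+1-1 = m+1 from rfl]⟩
      · obtain ⟨p, hp, hep⟩ := ih hm (by omega) (i-1) (by omega) (by omega)
        refine ⟨word n (List.range' 1 (m+1)) * p, mul_mem (word_mem_bpos (fun x hx => by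
          simp [List.mem_range'_1] at hx; omega)) hp, ?_⟩
        rw [key, hep, ← mul_assoc,
          LAword hm1 (l := List.range' (i-1) (m+1-(i-1))) (fun x hx => by
            simp [List.mem_range'_1] at hx; omega),
          map_shift_range', show i-1+1 = i from by omega, show m+1-(i-1) = m+1+1-i from by omega,
          mul_assoc]

/-- descending runs divide Δ-words -/
lemma DescMain {i j : ℕ} (hj : 1 ≤ j) (hij : j ≤ i) (hi : i ≤ n - 1) :
    ∃ p ∈ Bpos n, word n (Wlist (i+1)) = word n (List.range' j (i+1-j)).reverse * p := by
  have key : word n (Wlist (i+1))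
      = word n (List.range' 1 i).reverse * word n ((Wlist i).map (·+1)) := by
    rw [Wlist_succ (by omega), word_append,
      LDword hi (fun x hx => by have := mem_Wlist hx; omega)]
  have hsplit : List.range' 1 i = List.range' 1 (j-1) ++ List.range' j (i+1-j) := by
    have := List.range'_append_1 (s := 1) (m := j-1) (n := i+1-j)
    rw [show 1+(j-1) = j from by omega, show j-1+(i+1-j) = i from by omega] at this
    exact this.symm
  refine ⟨word n (List.range' 1 (j-1)).reverse * word n ((Wlist i).map (·+1)),
    mul_mem (word_mem_bpos (fun x hx => by simp [List.mem_range'_1] at hx; omega))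
      (word_mem_bpos (fun x hx => by
        simp only [List.mem_map] at hx; obtain ⟨y, hy, rfl⟩ := hx
        have := mem_Wlist hy; omega)), ?_⟩
  rw [key, hsplit]
  simp only [List.reverse_append]
  rw [word_append, mul_assoc]

end Scratch


namespace Scratch
variable {n : ℕ}

lemma descList_eq (t : ℕ) : descList t 1 = (List.range' 1 t).reverse := rfl

lemma Delta_eq : DeltaB n = word n (Wlist n) := rfl

lemma Wlist_prefix {m : ℕ} (h1 : 1 ≤ m) (h2 : m ≤ n) :
    ∃ rest : List ℕ, Wlist n = Wlist m ++ rest ∧ ∀ x ∈ rest, 1 ≤ x ∧ x ≤ n - 1 := by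
  refine ⟨((List.range' m (n-m)).map fun t => (List.range' 1 t).reverse).flatten, ?_, ?_⟩
  · have hsplit : List.range' 1 (n-1) = List.range' 1 (m-1) ++ List.range' m (n-m) := by
      have := List.range'_append_1 (s := 1) (m := m-1) (n := n-m)
      rw [show 1+(m-1) = m from by omega, show m-1+(n-m) = n-1 from by omega] at this
      exact this.symm
    simp only [Wlist, hsplit, List.map_append, List.flatten_append]
  · intro x hx
    simp only [List.mem_flatten, List.mem_map] at hx
    obtain ⟨_, ⟨t, ht, rfl⟩, hx⟩ := hx
    simp only [List.mem_reverse, List.mem_range'_1] at hx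
    simp only [List.mem_range'_1] at ht
    omega

lemma alpha_asc {i j : ℕ} (h : i ≤ j) : alphaB n i j = word n (List.range' i (j+1-i)) :=
  if_pos h

lemma alpha_desc {i j : ℕ} (h : ¬ i ≤ j) : alphaB n i j = word n (List.range' j (i+1-j)).reverse :=
  if_neg h

lemma alpha_mem_bpos {i j : ℕ} (hi1 : 1 ≤ i) (hi2 : i ≤ n-1) (hj1 : 1 ≤ j) (hj2 : j ≤ n-1) :
    alphaB n i j ∈ Bpos n := by
  rcases le_or_gt i j with h | h
  · rw [alpha_asc h]
    exact word_mem_bpos fun x hx => by simp [List.mem_range'_1] at hx; omega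
  · rw [alpha_desc (by omega)]
    exact word_mem_bpos fun x hx => by simp [List.mem_range'_1] at hx; omega

lemma alpha_le_Delta {i j : ℕ} (hn : 2 ≤ n) (hi1 : 1 ≤ i) (hi2 : i ≤ n-1) (hj1 : 1 ≤ j)
    (hj2 : j ≤ n-1) : bLe n (alphaB n i j) (DeltaB n) := by
  have main : ∃ p ∈ Bpos n, DeltaB n = alphaB n i j * p := by
    rcases le_or_gt i j with h | h
    · obtain ⟨p, hp, hep⟩ := AscMain (n := n) j hj1 hj2 i hi1 h
      obtain ⟨rest, hrest, hmem⟩ := Wlist_prefix (n := n) (m := j+1) (by omega) (by omega)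
      refine ⟨p * word n rest, mul_mem hp (word_mem_bpos hmem), ?_⟩
      rw [Delta_eq, hrest, word_append, hep, alpha_asc h, mul_assoc]
    · obtain ⟨p, hp, hep⟩ := DescMain (n := n) hj1 (by omega) hi2
      obtain ⟨rest, hrest, hmem⟩ := Wlist_prefix (n := n) (m := i+1) (by omega) (by omega)
      refine ⟨p * word n rest, mul_mem hp (word_mem_bpos hmem), ?_⟩
      rw [Delta_eq, hrest, word_append, hep, alpha_desc (by omega), mul_assoc]
  obtain ⟨p, hp, hep⟩ := main
  unfold bLe
  rw [hep, inv_mul_cancel_left]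
  exact hp

end Scratch


namespace Scratch
variable {n : ℕ}

def pWt (n m : ℕ) : Equiv.Perm ℕ := if 1 ≤ m ∧ m ≤ n - 1 then Equiv.swap m (m+1) else 1

lemma swap_braid (i : ℕ) :
    Equiv.swap i (i+1) * Equiv.swap (i+1) (i+2) * Equiv.swap i (i+1)
      = Equiv.swap (i+1) (i+2) * Equiv.swap i (i+1) * Equiv.swap (i+1) (i+2) := by
  have e1 : Equiv.swap (i+1) i * Equiv.swap (i+2) (i+1) * Equiv.swap (i+1) i
      = Equiv.swap i (i+2) :=
    Equiv.swap_mul_swap_mul_swap (x := i+2) (y := i+1) (z := i) (by omega) (by omega)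
  have e2 : Equiv.swap (i+1) (i+2) * Equiv.swap i (i+1) * Equiv.swap (i+1) (i+2)
      = Equiv.swap (i+2) i :=
    Equiv.swap_mul_swap_mul_swap (x := i) (y := i+1) (z := i+2) (by omega) (by omega)
  rw [e2, Equiv.swap_comm i (i+1), Equiv.swap_comm (i+1) (i+2), e1, Equiv.swap_comm]

lemma swap_comm' {i j : ℕ} (h : i + 2 ≤ j) :
    Equiv.swap i (i+1) * Equiv.swap j (j+1) = Equiv.swap j (j+1) * Equiv.swap i (i+1) := by
  refine (Equiv.Perm.Disjoint.commute (fun x => ?_)).eq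
  by_cases hx : x = i ∨ x = i+1
  · right; apply Equiv.swap_apply_of_ne_of_ne <;> omega
  · left; apply Equiv.swap_apply_of_ne_of_ne <;> omega

def Phom (n : ℕ) : B n →* Equiv.Perm ℕ :=
  PresentedGroup.toGroup (f := pWt n) (by
    intro r hr
    rcases hr with ⟨i, h1, h2, rfl⟩ | ⟨i, j, h1, h2, h3, rfl⟩ | ⟨i, hi, rfl⟩
    · simp only [map_mul, map_inv, FreeGroup.lift_apply_of, mul_inv_eq_one]
      rw [show pWt n i = Equiv.swap i (i+1) from if_pos ⟨h1, by omega⟩,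
          show pWt n (i+1) = Equiv.swap (i+1) (i+1+1) from if_pos ⟨by omega, by omega⟩]
      exact swap_braid i
    · simp only [map_mul, map_inv, FreeGroup.lift_apply_of, mul_inv_eq_one]
      rw [show pWt n i = Equiv.swap i (i+1) from if_pos ⟨h1, by omega⟩,
          show pWt n j = Equiv.swap j (j+1) from if_pos ⟨by omega, by omega⟩]
      exact swap_comm' h2
    · simp only [FreeGroup.lift_apply_of]
      exact if_neg (by omega))

lemma Phom_sigma {m : ℕ} (h1 : 1 ≤ m) (h2 : m ≤ n-1) :
    Phom n (σb n m) = Equiv.swap m (m+1) := by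
  rw [σb, Phom, PresentedGroup.toGroup.of]
  exact if_pos ⟨h1, h2⟩

def Ehom (n : ℕ) : B n →* Multiplicative ℤ :=
  PresentedGroup.toGroup
    (f := fun m => Multiplicative.ofAdd (if 1 ≤ m ∧ m ≤ n - 1 then (1:ℤ) else 0)) (by
    intro r hr
    rcases hr with ⟨i, h1, h2, rfl⟩ | ⟨i, j, h1, h2, h3, rfl⟩ | ⟨i, hi, rfl⟩
    · simp only [map_mul, map_inv, FreeGroup.lift_apply_of, mul_inv_eq_one]
      rw [if_pos (⟨h1, by omega⟩ : 1 ≤ i ∧ i ≤ n - 1),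
        if_pos (⟨by omega, by omega⟩ : 1 ≤ i+1 ∧ i+1 ≤ n - 1)]
    · simp only [map_mul, map_inv, FreeGroup.lift_apply_of, mul_inv_eq_one]
      rw [mul_comm]
    · simp only [FreeGroup.lift_apply_of]
      rw [if_neg (by omega)]
      rfl)

lemma Ehom_sigma {m : ℕ} (h1 : 1 ≤ m) (h2 : m ≤ n-1) :
    Ehom n (σb n m) = Multiplicative.ofAdd (1:ℤ) := by
  rw [σb, Ehom, PresentedGroup.toGroup.of, if_pos ⟨h1, h2⟩]

lemma Ehom_word {l : List ℕ} (h : ∀ x ∈ l, 1 ≤ x ∧ x ≤ n-1) :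
    Ehom n (word n l) = Multiplicative.ofAdd (l.length : ℤ) := by
  induction l with
  | nil => simp [word_nil]
  | cons a t ih =>
      rw [word_cons, map_mul, Ehom_sigma (h a (by simp)).1 (h a (by simp)).2,
        ih (fun x hx => h x (by simp [hx]))]
      rw [← ofAdd_add]
      congr 1
      simp only [List.length_cons]
      push_cast
      ring

end Scratch


namespace Scratch
variable {n : ℕ}

lemma Phom_run_apply {a c : ℕ} (h1 : 1 ≤ a) (hb : a + c ≤ n-1) (x : ℕ) :
    Phom n (word n (List.range' a (c+1))) x
      = if x = a+c+1 then a else if a ≤ x ∧ x ≤ a+c then x+1 else x := by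
  induction c generalizing a with
  | zero =>
      have : List.range' a 1 = [a] := rfl
      rw [this, word_singleton, Phom_sigma h1 (by omega)]
      simp only [Equiv.swap_apply_def]
      split_ifs <;> omega
  | succ c ih =>
      rw [List.range'_succ, word_cons, map_mul, Equiv.Perm.mul_apply,
        ih (by omega) (by omega), Phom_sigma h1 (by omega)]
      simp only [Equiv.swap_apply_def]
      split_ifs <;> omega

lemma Phom_drun_apply {b c : ℕ} (h1 : 1 ≤ b) (hb : b + c ≤ n-1) (x : ℕ) :
    Phom n (word n (List.range' b (c+1)).reverse) x
      = if x = b then b+c+1 else if b+1 ≤ x ∧ x ≤ b+c+1 then x-1 else x := by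
  induction c with
  | zero =>
      have : (List.range' b 1).reverse = [b] := rfl
      rw [this, word_singleton, Phom_sigma h1 (by omega)]
      simp only [Equiv.swap_apply_def]
      split_ifs <;> omega
  | succ c ih =>
      have hconcat : List.range' b (c+1+1) = List.range' b (c+1) ++ [b+c+1] := by
        have := List.range'_concat (step := 1) (s := b) (n := c+1)
        rw [show b+1*(c+1) = b+c+1 from by omega] at this
        exact this
      rw [hconcat, List.reverse_append, List.reverse_singleton, List.singleton_append, word_cons,
        map_mul, Equiv.Perm.mul_apply, ih (by omega), Phom_sigma (by omega) (by omega)]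
      simp only [Equiv.swap_apply_def]
      split_ifs <;> omega

def InvN (n : ℕ) (w : Equiv.Perm ℕ) : ℕ :=
  (((Finset.range (n+1)) ×ˢ (Finset.range (n+1))).filter fun p => p.1 < p.2 ∧ w p.2 < w p.1).card

lemma InvN_one : InvN n 1 = 0 := by
  rw [InvN, Finset.card_eq_zero, Finset.filter_eq_empty_iff]
  intro x _ h; simp at h; omega

lemma InvN_swap_mul_le (k : ℕ) (w : Equiv.Perm ℕ) :
    InvN n (Equiv.swap k (k+1) * w) ≤ InvN n w + 1 := by
  classical
  set A := ((Finset.range (n+1)) ×ˢ (Finset.range (n+1))).filter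
    fun p => p.1 < p.2 ∧ w p.2 < w p.1 with hA
  set Bs := ((Finset.range (n+1)) ×ˢ (Finset.range (n+1))).filter
    fun p => p.1 < p.2 ∧ (Equiv.swap k (k+1) * w) p.2 < (Equiv.swap k (k+1) * w) p.1 with hB
  have hsub : Bs ⊆ insert (w⁻¹ k, w⁻¹ (k+1)) A := by
    intro p hp
    rw [hB, Finset.mem_filter] at hp
    simp only [Finset.mem_product, Finset.mem_range,
      Equiv.Perm.mul_apply] at hp
    obtain ⟨⟨hp1, hp2⟩, hlt, hswap⟩ := hp
    have key : w p.2 < w p.1 ∨ (w p.1 = k ∧ w p.2 = k + 1) := by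
      revert hswap
      simp only [Equiv.swap_apply_def]
      split_ifs <;> intro hswap <;> omega
    rcases key with key | key
    · refine Finset.mem_insert_of_mem ?_
      simp only [hA, Finset.mem_filter, Finset.mem_product, Finset.mem_range]
      exact ⟨⟨hp1, hp2⟩, hlt, key⟩
    · have hpe : p = (w⁻¹ k, w⁻¹ (k+1)) := by
        have e1 : p.1 = w⁻¹ k := by rw [← key.1, ← Equiv.Perm.mul_apply, inv_mul_cancel, Equiv.Perm.one_apply]
        have e2 : p.2 = w⁻¹ (k+1) := by rw [← key.2, ← Equiv.Perm.mul_apply, inv_mul_cancel, Equiv.Perm.one_apply]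
        exact Prod.ext e1 e2
      rw [hpe]
      exact Finset.mem_insert_self _ _
  calc Bs.card ≤ (insert (w⁻¹ k, w⁻¹ (k+1)) A).card := Finset.card_le_card hsub
    _ ≤ A.card + 1 := Finset.card_insert_le _ _

end Scratch


namespace Scratch
variable {n : ℕ}

lemma bpos_bound {p : B n} (hp : p ∈ Bpos n) :
    ∀ w, (InvN n (Phom n p * w) : ℤ) ≤ Multiplicative.toAdd (Ehom n p) + InvN n w := by
  induction hp using Submonoid.closure_induction with
  | mem x hx =>
      obtain ⟨i, h1, h2, rfl⟩ := hx
      intro w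
      rw [Phom_sigma h1 h2, Ehom_sigma h1 h2]
      have := InvN_swap_mul_le (n := n) i w
      simp only [toAdd_ofAdd]
      omega
  | one =>
      intro w
      simp only [map_one, one_mul, toAdd_one]
      omega
  | mul x y hx hy ihx ihy =>
      intro w
      rw [map_mul, map_mul, mul_assoc, toAdd_mul]
      calc (InvN n (Phom n x * (Phom n y * w)) : ℤ)
          ≤ Multiplicative.toAdd (Ehom n x) + InvN n (Phom n y * w) := ihx _
        _ ≤ Multiplicative.toAdd (Ehom n x) + (Multiplicative.toAdd (Ehom n y) + InvN n w) := by
            have := ihy w; omega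
        _ = Multiplicative.toAdd (Ehom n x) + Multiplicative.toAdd (Ehom n y) + (InvN n w : ℤ) := by
            ring

lemma lower_asc {i j k : ℕ} (hi1 : 1 ≤ i) (hij : i ≤ j) (hj : j ≤ n-1) (hk : k ≠ i) :
    (j + 1 - i : ℕ) ≤ InvN n (Equiv.swap k (k+1) * Phom n (word n (List.range' i (j+1-i)))) := by
  classical
  set u := Equiv.swap k (k+1) * Phom n (word n (List.range' i (j+1-i))) with hu
  have hval : ∀ x, u x = Equiv.swap k (k+1)
      (if x = j+1 then i else if i ≤ x ∧ x ≤ j then x+1 else x) := by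
    intro x
    rw [hu, Equiv.Perm.mul_apply,
      show j+1-i = (j-i)+1 from by omega, Phom_run_apply hi1 (by omega),
      show i+(j-i)+1 = j+1 from by omega, show i+(j-i) = j from by omega]
  have hsub : (Finset.Icc i j).image (fun x => (x, j+1)) ⊆
      ((Finset.range (n+1)) ×ˢ (Finset.range (n+1))).filter fun p => p.1 < p.2 ∧ u p.2 < u p.1 := by
    intro p hp
    simp only [Finset.mem_image, Finset.mem_Icc] at hp
    obtain ⟨x, ⟨hx1, hx2⟩, rfl⟩ := hp
    simp only [Finset.mem_filter, Finset.mem_product, Finset.mem_range]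
    refine ⟨⟨by omega, by omega⟩, by omega, ?_⟩
    rw [hval, hval, if_pos rfl, if_neg (by omega), if_pos ⟨hx1, hx2⟩]
    simp only [Equiv.swap_apply_def]
    split_ifs <;> omega
  have hcard := Finset.card_le_card hsub
  rw [Finset.card_image_of_injective _ (fun a b hab => (Prod.mk.injEq _ _ _ _ ▸ hab).1),
    Nat.card_Icc] at hcard
  exact le_trans (by omega) hcard

lemma lower_desc {i j k : ℕ} (hj1 : 1 ≤ j) (hji : j ≤ i) (hi : i ≤ n-1) (hk : k ≠ i) :
    (i + 1 - j : ℕ) ≤ InvN n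
      (Equiv.swap k (k+1) * Phom n (word n (List.range' j (i+1-j)).reverse)) := by
  classical
  set u := Equiv.swap k (k+1) * Phom n (word n (List.range' j (i+1-j)).reverse) with hu
  have hval : ∀ x, u x = Equiv.swap k (k+1)
      (if x = j then i+1 else if j+1 ≤ x ∧ x ≤ i+1 then x-1 else x) := by
    intro x
    rw [hu, Equiv.Perm.mul_apply,
      show i+1-j = (i-j)+1 from by omega, Phom_drun_apply hj1 (by omega),
      show j+(i-j)+1 = i+1 from by omega]
  have hsub : (Finset.Icc (j+1) (i+1)).image (fun x => (j, x)) ⊆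
      ((Finset.range (n+1)) ×ˢ (Finset.range (n+1))).filter fun p => p.1 < p.2 ∧ u p.2 < u p.1 := by
    intro p hp
    simp only [Finset.mem_image, Finset.mem_Icc] at hp
    obtain ⟨x, ⟨hx1, hx2⟩, rfl⟩ := hp
    simp only [Finset.mem_filter, Finset.mem_product, Finset.mem_range]
    refine ⟨⟨by omega, by omega⟩, by omega, ?_⟩
    rw [hval, hval, if_pos rfl, if_neg (by omega), if_pos ⟨hx1, hx2⟩]
    simp only [Equiv.swap_apply_def]
    split_ifs <;> omega
  have hcard := Finset.card_le_card hsub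
  rw [Finset.card_image_of_injective _ (fun a b hab => (Prod.mk.injEq _ _ _ _ ▸ hab).2),
    Nat.card_Icc] at hcard
  exact le_trans (by omega) hcard

lemma not_sigma_le_alpha {i j k : ℕ} (hi1 : 1 ≤ i) (hi2 : i ≤ n-1) (hj1 : 1 ≤ j) (hj2 : j ≤ n-1)
    (hk1 : 1 ≤ k) (hk2 : k ≤ n-1) (hk : k ≠ i) : ¬ bLe n (σb n k) (alphaB n i j) := by
  intro hle
  have bound := bpos_bound hle 1
  rw [mul_one, InvN_one, map_mul, map_mul, map_inv, map_inv, Phom_sigma hk1 hk2,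
    Equiv.swap_inv, Ehom_sigma hk1 hk2] at bound
  rcases le_or_gt i j with h | h
  · rw [alpha_asc h] at bound
    have hlen := Ehom_word (n := n) (l := List.range' i (j+1-i))
      (fun x hx => by simp [List.mem_range'_1] at hx; omega)
    rw [hlen] at bound
    have hlow := lower_asc hi1 h hj2 hk
    simp only [toAdd_mul, toAdd_inv, toAdd_ofAdd, List.length_range'] at bound
    omega
  · rw [alpha_desc (by omega)] at bound
    have hlen := Ehom_word (n := n) (l := (List.range' j (i+1-j)).reverse)
      (fun x hx => by simp [List.mem_range'_1] at hx; omega)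
    rw [hlen] at bound
    have hlow := lower_desc hj1 (by omega) hi2 hk
    simp only [toAdd_mul, toAdd_inv, toAdd_ofAdd, List.length_reverse, List.length_range'] at bound
    omega

end Scratch


namespace Scratch
variable {n : ℕ}

def Rhom (n : ℕ) : B n →* (B n)ᵐᵒᵖ :=
  PresentedGroup.toGroup (f := fun m => MulOpposite.op (σb n m)) (by
    intro r hr
    rcases hr with ⟨i, h1, h2, rfl⟩ | ⟨i, j, h1, h2, h3, rfl⟩ | ⟨i, hi, rfl⟩
    · simp only [map_mul, map_inv, FreeGroup.lift_apply_of, mul_inv_eq_one, ← MulOpposite.op_mul]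
      apply congrArg
      rw [← mul_assoc, ← mul_assoc, braid_rel h1 h2]
    · simp only [map_mul, map_inv, FreeGroup.lift_apply_of, mul_inv_eq_one, ← MulOpposite.op_mul]
      apply congrArg
      rw [comm_rel h1 h2 h3]
    · simp only [FreeGroup.lift_apply_of, MulOpposite.op_eq_one_iff]
      exact sigma_out hi)

lemma Rhom_sigma (m : ℕ) : Rhom n (σb n m) = MulOpposite.op (σb n m) :=
  PresentedGroup.toGroup.of _

lemma Rhom_word (l : List ℕ) : Rhom n (word n l) = MulOpposite.op (word n l.reverse) := by
  induction l with
  | nil => simp [word_nil]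
  | cons a t ih =>
      rw [word_cons, map_mul, Rhom_sigma, ih, ← MulOpposite.op_mul, List.reverse_cons,
        word_append, word_singleton]

lemma Rhom_bpos {x : B n} (hx : x ∈ Bpos n) : (Rhom n x).unop ∈ Bpos n := by
  induction hx using Submonoid.closure_induction with
  | mem y hy =>
      obtain ⟨i, h1, h2, rfl⟩ := hy
      rw [Rhom_sigma, MulOpposite.unop_op]
      exact sigma_mem_bpos h1 h2
  | one => rw [map_one, MulOpposite.unop_one]; exact one_mem _
  | mul x y hx hy ihx ihy =>
      rw [map_mul, MulOpposite.unop_mul]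
      exact mul_mem ihy ihx

lemma Rhom_alpha {i j : ℕ} : (Rhom n (alphaB n i j)).unop = alphaB n j i := by
  rcases lt_trichotomy i j with h | rfl | h
  · rw [alpha_asc (le_of_lt h), Rhom_word, MulOpposite.unop_op, alpha_desc (by omega)]
  · rw [alpha_asc le_rfl, Rhom_word, MulOpposite.unop_op, show i+1-i = 1 from by omega,
      show (List.range' i 1 : List ℕ) = [i] from rfl, List.reverse_singleton]
  · rw [alpha_desc (by omega), Rhom_word, MulOpposite.unop_op, List.reverse_reverse,
      alpha_asc (le_of_lt h)]

lemma sigma_le_alpha {i j : ℕ} (hi1 : 1 ≤ i) (hi2 : i ≤ n-1) (hj1 : 1 ≤ j) (hj2 : j ≤ n-1) :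
    bLe n (σb n i) (alphaB n i j) := by
  unfold bLe
  rcases le_or_gt i j with h | h
  · rw [alpha_asc h, show j+1-i = (j-i)+1 from by omega, List.range'_succ, word_cons,
      inv_mul_cancel_left]
    exact word_mem_bpos fun x hx => by simp [List.mem_range'_1] at hx; omega
  · rw [alpha_desc (by omega), show i+1-j = (i-j)+1 from by omega,
      show List.range' j ((i-j)+1) = List.range' j (i-j) ++ [j + 1*(i-j)] from
        List.range'_concat (step := 1) (s := j) (n := i-j),
      show j + 1*(i-j) = i from by omega, List.reverse_append, List.reverse_singleton,
      List.singleton_append, word_cons, inv_mul_cancel_left]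
    exact word_mem_bpos fun x hx => by simp [List.mem_range'_1] at hx; omega

lemma alpha_ge_sigma {i j : ℕ} (hi1 : 1 ≤ i) (hi2 : i ≤ n-1) (hj1 : 1 ≤ j) (hj2 : j ≤ n-1) :
    bGe n (alphaB n i j) (σb n j) := by
  unfold bGe
  rcases le_or_gt i j with h | h
  · rw [alpha_asc h, show j+1-i = (j-i)+1 from by omega,
      show List.range' i ((j-i)+1) = List.range' i (j-i) ++ [i + 1*(j-i)] from
        List.range'_concat (step := 1) (s := i) (n := j-i),
      show i + 1*(j-i) = j from by omega, word_append, word_singleton, mul_inv_cancel_right]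
    exact word_mem_bpos fun x hx => by simp [List.mem_range'_1] at hx; omega
  · rw [alpha_desc (by omega), show i+1-j = (i-j)+1 from by omega, List.range'_succ,
      List.reverse_cons, word_append, word_singleton, mul_inv_cancel_right]
    exact word_mem_bpos fun x hx => by simp [List.mem_range'_1] at hx; omega

lemma startSet_alpha {i j : ℕ} (hi1 : 1 ≤ i) (hi2 : i ≤ n-1) (hj1 : 1 ≤ j) (hj2 : j ≤ n-1) :
    startSet n (alphaB n i j) = {i} := by
  ext k
  simp only [startSet, Set.mem_setOf_eq, Set.mem_singleton_iff]
  constructor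
  · rintro ⟨hk1, hk2, hle⟩
    by_contra hk
    exact not_sigma_le_alpha hi1 hi2 hj1 hj2 hk1 hk2 hk hle
  · rintro rfl
    exact ⟨hi1, hi2, sigma_le_alpha hi1 hi2 hj1 hj2⟩

lemma finishSet_alpha {i j : ℕ} (hi1 : 1 ≤ i) (hi2 : i ≤ n-1) (hj1 : 1 ≤ j) (hj2 : j ≤ n-1) :
    finishSet n (alphaB n i j) = {j} := by
  ext k
  simp only [finishSet, Set.mem_setOf_eq, Set.mem_singleton_iff]
  constructor
  · rintro ⟨hk1, hk2, hge⟩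
    have hmem := Rhom_bpos hge
    rw [map_mul, map_inv, MulOpposite.unop_mul, MulOpposite.unop_inv, Rhom_sigma,
      MulOpposite.unop_op, Rhom_alpha] at hmem
    have : k ∈ startSet n (alphaB n j i) := ⟨hk1, hk2, hmem⟩
    rw [startSet_alpha hj1 hj2 hi1 hi2] at this
    exact this
  · rintro rfl
    exact ⟨hj1, hj2, alpha_ge_sigma hi1 hi2 hj1 hj2⟩

end Scratch


/-- `α_{i,j}` is simple, with `S(α_{i,j}) = {i}` and `F(α_{i,j}) = {j}`. -/
theorem statement6 (n i j : ℕ) (hn : 2 ≤ n)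
    (hi1 : 1 ≤ i) (hi2 : i ≤ n - 1) (hj1 : 1 ≤ j) (hj2 : j ≤ n - 1) :
    isSimple n (alphaB n i j) ∧
    startSet n (alphaB n i j) = {i} ∧ finishSet n (alphaB n i j) = {j} := by
  exact ⟨⟨Scratch.alpha_mem_bpos hi1 hi2 hj1 hj2, Scratch.alpha_le_Delta hn hi1 hi2 hj1 hj2⟩,
    Scratch.startSet_alpha hi1 hi2 hj1 hj2, Scratch.finishSet_alpha hi1 hi2 hj1 hj2⟩
end
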